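/- arXiv:2012.06313 — 4 statements merged into one kernel-verified Lean document; each statement's English description precedes it below -/
import Mathlib

section
/- For every ε > 0 there is a constant C(ε) such that for all N ≥ 1 and all complex sequences (a_k), ∫_0^{2π} |Σ_{k=0}^{N−1} a_k e^{−i t k(k+1)}|⁴ dt ≤ C(ε) N^ε (Σ_{k=0}^{N−1} |a_k|²)². -/
/-
Squaring the exponential sum gives a trigonometric polynomial whose coefficient at frequency
`n` is a sum over the representations `n = k(k+1) + ℓ(ℓ+1)`, so by Parseval and Cauchy–Schwarz
the fourth moment is at most `2π · (max_n r(n)) · (∑ |a_k|²)²`. Since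
`2(k(k+1) + ℓ(ℓ+1)) + 1 = (k+ℓ+1)² + (k-ℓ)²`, distinct representations of `n` give pairwise
non-associated Gaussian integers dividing `2n + 1`, and the divisor bound in `ℤ[i]` gives
`r(n) ≪_ε (2n+1)^ε`.
-/

open Real Finset UniqueFactorizationMonoid

section Fourier

open Complex ComplexConjugate

theorem integral_exp_neg_I_mul_int (n : ℤ) :
    ∫ t in (0 : ℝ)..(2 * π), exp (-I * t * n) = if n = 0 then (2 * π : ℂ) else 0 := by
  split_ifs with hn
  · simp [hn]
  · have hc : -I * n ≠ 0 := by simp [I_ne_zero, hn]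
    have hperiod : exp (-I * n * (2 * π : ℝ)) = 1 := by
      rw [show -I * n * (2 * π : ℝ) = ((-n : ℤ) : ℂ) * (2 * π * I) by push_cast; ring]
      exact exp_int_mul_two_pi_mul_I _
    simp_rw [mul_right_comm (-I) _ (n : ℂ)]
    rw [integral_exp_mul_complex hc, hperiod]
    simp

theorem integral_norm_sq_sum_exp (s : Finset ℤ) (c : ℤ → ℂ) :
    ∫ t in (0 : ℝ)..(2 * π), ‖∑ n ∈ s, c n * exp (-I * t * n)‖ ^ 2 =
      2 * π * ∑ n ∈ s, ‖c n‖ ^ 2 := by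
  have hexpand : ∀ t : ℝ, ((‖∑ n ∈ s, c n * exp (-I * t * n)‖ ^ 2 : ℝ) : ℂ) =
      ∑ n ∈ s, ∑ m ∈ s, c n * conj (c m) * exp (-I * t * (n - m : ℤ)) := by
    intro t
    rw [ofReal_pow, ← mul_conj', map_sum, sum_mul_sum]
    refine sum_congr rfl fun n _ => sum_congr rfl fun m _ => ?_
    rw [map_mul, ← exp_conj, mul_mul_mul_comm, ← Complex.exp_add]
    congr 2
    simp [conj_ofReal]
    ring
  have hcont : ∀ n m : ℤ,
      Continuous fun t : ℝ => c n * conj (c m) * exp (-I * t * (n - m : ℤ)) := by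
    intro n m; fun_prop
  apply ofReal_injective
  rw [← intervalIntegral.integral_ofReal]
  simp_rw [hexpand]
  rw [intervalIntegral.integral_finsetSum fun n _ =>
    (continuous_finsetSum _ fun m _ => hcont n m).intervalIntegrable _ _]
  simp_rw [intervalIntegral.integral_finsetSum fun m _ => (hcont _ m).intervalIntegrable _ _,
    intervalIntegral.integral_const_mul, integral_exp_neg_I_mul_int, sub_eq_zero]
  simp [mul_sum, mul_conj', mul_comm]

variable {ι : Type*}

def pairsWithSum (s : Finset ι) (f : ι → ℤ) (n : ℤ) : Finset (ι × ι) :=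
  {p ∈ s ×ˢ s | f p.1 + f p.2 = n}

theorem sq_sum_exp (s : Finset ι) (f : ι → ℤ) (a : ι → ℂ) (t : ℝ) :
    (∑ k ∈ s, a k * exp (-I * t * f k)) ^ 2 =
      ∑ n ∈ (s ×ˢ s).image (fun p => f p.1 + f p.2),
        (∑ p ∈ pairsWithSum s f n, a p.1 * a p.2) * exp (-I * t * n) := by
  rw [sq, sum_mul_sum, ← sum_product', ← sum_fiberwise_of_maps_to fun p hp =>
    mem_image_of_mem (fun p : ι × ι => f p.1 + f p.2) hp]
  refine sum_congr rfl fun n _ => ?_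
  rw [sum_mul]
  refine sum_congr rfl fun p hp => ?_
  rw [← (mem_filter.mp hp).2, mul_mul_mul_comm, ← Complex.exp_add]
  push_cast
  ring_nf

theorem integral_norm_pow_four_sum_exp_le (s : Finset ι) (f : ι → ℤ) (a : ι → ℂ) {R : ℝ}
    (hR : ∀ n, (#(pairsWithSum s f n) : ℝ) ≤ R) :
    ∫ t in (0 : ℝ)..(2 * π), ‖∑ k ∈ s, a k * exp (-I * t * f k)‖ ^ 4 ≤
      2 * π * R * (∑ k ∈ s, ‖a k‖ ^ 2) ^ 2 := by
  have hmaps : ∀ p ∈ s ×ˢ s, f p.1 + f p.2 ∈ (s ×ˢ s).image (fun p => f p.1 + f p.2) :=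
    fun p hp => mem_image_of_mem _ hp
  have hcs : ∀ n, ‖∑ p ∈ pairsWithSum s f n, a p.1 * a p.2‖ ^ 2 ≤
      R * ∑ p ∈ pairsWithSum s f n, ‖a p.1‖ ^ 2 * ‖a p.2‖ ^ 2 := fun n =>
    calc ‖∑ p ∈ pairsWithSum s f n, a p.1 * a p.2‖ ^ 2
        ≤ (∑ p ∈ pairsWithSum s f n, ‖a p.1 * a p.2‖) ^ 2 := by gcongr; exact norm_sum_le _ _
      _ ≤ #(pairsWithSum s f n) * ∑ p ∈ pairsWithSum s f n, ‖a p.1 * a p.2‖ ^ 2 :=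
        sq_sum_le_card_mul_sum_sq
      _ ≤ R * ∑ p ∈ pairsWithSum s f n, ‖a p.1‖ ^ 2 * ‖a p.2‖ ^ 2 := by
        simp_rw [norm_mul, mul_pow]
        gcongr
        exact hR n
  calc ∫ t in (0 : ℝ)..(2 * π), ‖∑ k ∈ s, a k * exp (-I * t * f k)‖ ^ 4
      = ∫ t in (0 : ℝ)..(2 * π), ‖∑ n ∈ (s ×ˢ s).image (fun p => f p.1 + f p.2),
          (∑ p ∈ pairsWithSum s f n, a p.1 * a p.2) * exp (-I * t * n)‖ ^ 2 := by
        congr 1 with t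
        rw [← sq_sum_exp, norm_pow, ← pow_mul]
    _ = 2 * π * ∑ n ∈ (s ×ˢ s).image (fun p => f p.1 + f p.2),
          ‖∑ p ∈ pairsWithSum s f n, a p.1 * a p.2‖ ^ 2 := integral_norm_sq_sum_exp _ _
    _ ≤ 2 * π * ∑ n ∈ (s ×ˢ s).image (fun p => f p.1 + f p.2),
          R * ∑ p ∈ pairsWithSum s f n, ‖a p.1‖ ^ 2 * ‖a p.2‖ ^ 2 := by
        gcongr with n; exact hcs n
    _ = 2 * π * R * (∑ k ∈ s, ‖a k‖ ^ 2) ^ 2 := by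
        unfold pairsWithSum
        rw [← mul_sum, sum_fiberwise_of_maps_to hmaps, sq, sum_mul_sum, ← sum_product']
        ring

end Fourier

theorem Multiset.card_le_prod_count_add_one {α : Type*} [DecidableEq α] {m : Multiset α}
    {F : Finset (Multiset α)} (hF : ∀ x ∈ F, x ≤ m) :
    #F ≤ ∏ p ∈ m.toFinset, (m.count p + 1) := by
  have hcounts : Set.InjOn (fun x : Multiset α => fun p (_ : p ∈ m.toFinset) => x.count p) F := by
    intro x hx y hy hxy
    ext p
    by_cases hp : p ∈ m.toFinset
    · exact congrFun (congrFun hxy p) hp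
    · have hm : m.count p = 0 := Multiset.count_eq_zero.mpr (mt Multiset.mem_toFinset.mpr hp)
      have := Multiset.count_le_of_le p (hF x hx)
      have := Multiset.count_le_of_le p (hF y hy)
      omega
  have hmaps : ∀ x ∈ F, (fun p (_ : p ∈ m.toFinset) => x.count p) ∈
      m.toFinset.pi fun p => Finset.range (m.count p + 1) := fun x hx =>
    Finset.mem_pi.mpr fun p _ =>
      Finset.mem_range.mpr (Nat.lt_succ_of_le (Multiset.count_le_of_le p (hF x hx)))
  simpa [card_pi] using card_le_card_of_injOn _ hmaps hcounts

theorem add_one_le_pow_of_two_le {x : ℝ} (hx : 2 ≤ x) (e : ℕ) : (e + 1 : ℝ) ≤ x ^ e := by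
  have hbernoulli := one_add_mul_le_pow (a := x - 1) (by linarith) e
  rw [add_sub_cancel] at hbernoulli
  linarith [mul_nonneg e.cast_nonneg (sub_nonneg.mpr hx)]

theorem add_one_le_mul_pow {b : ℝ} (hb : 1 < b) (e : ℕ) :
    (e + 1 : ℝ) ≤ (1 + (log b)⁻¹) * b ^ e := by
  have hL := log_pos hb
  have hexp : 1 + e * log b ≤ b ^ e := by
    rw [← exp_log (by linarith : 0 < b), ← exp_nat_mul, log_exp, add_comm]
    exact add_one_le_exp _
  calc (e + 1 : ℝ) ≤ (1 + (log b)⁻¹) * (1 + e * log b) := by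
        have : (1 + (log b)⁻¹) * (1 + e * log b) = e + 1 + (e * log b + (log b)⁻¹) := by
          field_simp
          ring
        rw [this]
        linarith [inv_pos.mpr hL, mul_nonneg e.cast_nonneg hL.le]
    _ ≤ (1 + (log b)⁻¹) * b ^ e := by gcongr

theorem add_one_le_ite_mul_rpow_pow {δ q B : ℝ} (hδ : 0 < δ) (hB : 2 ^ δ⁻¹ ≤ B) (hq : 2 ≤ q)
    (e : ℕ) : (e + 1 : ℝ) ≤ (if q ≤ B then 1 + (log (2 ^ δ))⁻¹ else 1) * (q ^ δ) ^ e := by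
  have hb : 1 < (2 : ℝ) ^ δ := one_lt_rpow one_lt_two hδ
  have hL := inv_pos.mpr (log_pos hb)
  split_ifs with hsmall
  · calc (e + 1 : ℝ) ≤ (1 + (log (2 ^ δ))⁻¹) * ((2 : ℝ) ^ δ) ^ e := add_one_le_mul_pow hb e
      _ ≤ (1 + (log (2 ^ δ))⁻¹) * (q ^ δ) ^ e := by gcongr
  · have hq' : 2 ≤ q ^ δ :=
      calc (2 : ℝ) = ((2 : ℝ) ^ δ⁻¹) ^ δ := by
            rw [← rpow_mul zero_le_two, inv_mul_cancel₀ hδ.ne', rpow_one]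
        _ ≤ q ^ δ := by gcongr; linarith [not_le.mp hsmall]
    rw [one_mul]
    exact add_one_le_pow_of_two_le hq' e

section DivisorBound

variable {α : Type*} [CommMonoidWithZero α] [NormalizationMonoid α]
  [UniqueFactorizationMonoid α] [DecidableEq α]

theorem card_le_prod_count_normalizedFactors_add_one {ι : Type*} {x : α} (hx : x ≠ 0)
    {S : Finset ι} {g : ι → α} (hdvd : ∀ i ∈ S, g i ∣ x)
    (hassoc : ∀ i ∈ S, ∀ j ∈ S, Associated (g i) (g j) → i = j) :
    #S ≤ ∏ p ∈ (normalizedFactors x).toFinset, ((normalizedFactors x).count p + 1) := by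
  have hg : ∀ i ∈ S, g i ≠ 0 := fun i hi h0 => hx (zero_dvd_iff.mp (h0 ▸ hdvd i hi))
  have hinj : Set.InjOn (fun i => normalizedFactors (g i)) S := fun i hi j hj hij =>
    hassoc i hi j hj
      ((associated_iff_normalizedFactors_eq_normalizedFactors (hg i hi) (hg j hj)).mpr hij)
  rw [← card_image_of_injOn hinj]
  refine Multiset.card_le_prod_count_add_one fun y hy => ?_
  obtain ⟨i, hi, rfl⟩ := mem_image.mp hy
  exact (dvd_iff_normalizedFactors_le_normalizedFactors (hg i hi) hx).mp (hdvd i hi)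

theorem prod_count_normalizedFactors_add_one_le (Φ : α →* ℕ)
    (hΦ : ∀ p : α, Prime p → 2 ≤ Φ p)
    (hfin : ∀ B : ℕ, {p : α | Prime p ∧ normalize p = p ∧ Φ p ≤ B}.Finite)
    {δ : ℝ} (hδ : 0 < δ) :
    ∃ C : ℝ, 0 < C ∧ ∀ x : α, x ≠ 0 →
      ((∏ p ∈ (normalizedFactors x).toFinset, ((normalizedFactors x).count p + 1) : ℕ) : ℝ) ≤
        C * (Φ x : ℝ) ^ δ := by
  set B := ⌈(2 : ℝ) ^ δ⁻¹⌉₊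
  set C₀ := 1 + (log ((2 : ℝ) ^ δ))⁻¹
  have hC₀ : 1 ≤ C₀ :=
    le_add_of_nonneg_right (inv_nonneg.mpr (log_pos (one_lt_rpow one_lt_two hδ)).le)
  -- Each prime of norm above `2 ^ δ⁻¹` satisfies `e + 1 ≤ (Φ p ^ δ) ^ e` outright; the
  -- finitely many others cost a factor `C₀` each.
  refine ⟨C₀ ^ #(hfin B).toFinset, by positivity, fun x hx => ?_⟩
  set T := (normalizedFactors x).toFinset
  set e := fun p => (normalizedFactors x).count p
  have hsmall : ∏ p ∈ T, (if (Φ p : ℝ) ≤ B then C₀ else 1) ≤ C₀ ^ #(hfin B).toFinset := by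
    rw [prod_ite, prod_const, prod_const_one, mul_one]
    refine pow_le_pow_right₀ hC₀ (card_le_card fun p hp => ?_)
    obtain ⟨hpT, hpB⟩ := mem_filter.mp hp
    have hpx := Multiset.mem_toFinset.mp hpT
    exact (hfin B).mem_toFinset.mpr
      ⟨prime_of_normalized_factor p hpx, normalize_normalized_factor p hpx, mod_cast hpB⟩
  have hnorm : ∏ p ∈ T, (Φ p : ℝ) ^ e p = Φ x := by
    have hΦx : Φ (normalizedFactors x).prod = Φ x :=
      associated_iff_eq.mp ((prod_normalizedFactors hx).map Φ)
    rw [← hΦx, prod_multiset_count, map_prod]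
    push_cast [map_pow]
    rfl
  calc ((∏ p ∈ T, (e p + 1) : ℕ) : ℝ) = ∏ p ∈ T, ((e p : ℝ) + 1) := by push_cast; rfl
    _ ≤ ∏ p ∈ T, (if (Φ p : ℝ) ≤ B then C₀ else 1) * ((Φ p : ℝ) ^ δ) ^ e p :=
        prod_le_prod (fun _ _ => by positivity) fun p hp =>
          add_one_le_ite_mul_rpow_pow hδ (Nat.le_ceil _) (mod_cast hΦ p
            (prime_of_normalized_factor p (Multiset.mem_toFinset.mp hp))) _
    _ = (∏ p ∈ T, (if (Φ p : ℝ) ≤ B then C₀ else 1)) * (Φ x : ℝ) ^ δ := by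
        rw [prod_mul_distrib, ← hnorm, ← finsetProd_rpow _ _ (fun _ _ => by positivity)]
        simp_rw [rpow_pow_comm (Nat.cast_nonneg _)]
    _ ≤ C₀ ^ #(hfin B).toFinset * (Φ x : ℝ) ^ δ := by gcongr

end DivisorBound

theorem GaussianInt.finite_setOf_natAbs_norm_le (B : ℕ) :
    {z : GaussianInt | z.norm.natAbs ≤ B}.Finite := by
  have hbox := (Set.finite_Icc (-(B : ℤ)) B).prod (Set.finite_Icc (-(B : ℤ)) B)
  have hinj : Function.Injective fun z : GaussianInt => (z.re, z.im) := fun z w h =>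
    Zsqrtd.ext (congrArg Prod.fst h) (congrArg Prod.snd h)
  refine (hbox.preimage hinj.injOn).subset fun z hz => ?_
  have hz' : z.re.natAbs * z.re.natAbs + z.im.natAbs * z.im.natAbs ≤ B :=
    GaussianInt.natAbs_norm_eq z ▸ hz
  have hre := Nat.le_mul_self z.re.natAbs
  have him := Nat.le_mul_self z.im.natAbs
  simp only [Set.mem_preimage, Set.mem_prod, Set.mem_Icc]
  omega

theorem GaussianInt.two_le_natAbs_norm_of_prime {p : GaussianInt} (hp : Prime p) :
    2 ≤ p.norm.natAbs := by
  have h0 : p.norm.natAbs ≠ 0 := by simpa using hp.ne_zero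
  have h1 : p.norm.natAbs ≠ 1 := mt Zsqrtd.norm_eq_one_iff.mp hp.not_isUnit
  omega

theorem GaussianInt.exists_card_le_mul_rpow_of_dvd {δ : ℝ} (hδ : 0 < δ) :
    ∃ C : ℝ, 0 < C ∧ ∀ x : GaussianInt, x ≠ 0 →
      ∀ {ι : Type*} {S : Finset ι} {g : ι → GaussianInt},
      (∀ i ∈ S, g i ∣ x) → (∀ i ∈ S, ∀ j ∈ S, Associated (g i) (g j) → i = j) →
      (#S : ℝ) ≤ C * (x.norm.natAbs : ℝ) ^ δ := by
  let : StrongNormalizationMonoid GaussianInt :=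
    UniqueFactorizationMonoid.strongNormalizationMonoid
  obtain ⟨C, hC, hbound⟩ := prod_count_normalizedFactors_add_one_le
    ((Int.natAbsHom : ℤ →*₀ ℕ).toMonoidHom.comp Zsqrtd.normMonoidHom)
    (fun _ hp => two_le_natAbs_norm_of_prime hp)
    (fun B => (finite_setOf_natAbs_norm_le B).subset fun _ hp => hp.2.2) hδ
  exact ⟨C, hC, fun x hx _ _ _ hdvd hassoc =>
    (Nat.cast_le.mpr (card_le_prod_count_normalizedFactors_add_one hx hdvd hassoc)).trans
      (hbound x hx)⟩

def pronicFactor (k ℓ : ℕ) : GaussianInt := ⟨k + ℓ + 1, k - ℓ⟩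

theorem pronicFactor_mul_star (k ℓ : ℕ) :
    pronicFactor k ℓ * star (pronicFactor k ℓ) =
      ((2 * ((k : ℤ) * (k + 1) + (ℓ : ℤ) * (ℓ + 1)) + 1 : ℤ) : GaussianInt) := by
  rw [← Zsqrtd.norm_eq_mul_conj]
  simp only [Zsqrtd.norm, pronicFactor]
  push_cast
  ring_nf

theorem eq_of_associated_pronicFactor {k ℓ k' ℓ' : ℕ}
    (h : Associated (pronicFactor k ℓ) (pronicFactor k' ℓ')) : k = k' ∧ ℓ = ℓ' := by
  obtain ⟨u, hu⟩ := h
  have hnorm : (u : GaussianInt).norm = 1 :=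
    (Zsqrtd.norm_eq_one_iff' (by norm_num) _).mpr u.isUnit
  have hre := congrArg Zsqrtd.re hu
  have him := congrArg Zsqrtd.im hu
  simp only [pronicFactor, Zsqrtd.re_mul, Zsqrtd.im_mul] at hre him
  rw [Zsqrtd.norm_def] at hnorm
  generalize (u : GaussianInt).re = a at hnorm hre him
  generalize (u : GaussianInt).im = b at hnorm hre him
  obtain ⟨ha₁, ha₂⟩ : -1 ≤ a ∧ a ≤ 1 := by constructor <;> nlinarith [sq_nonneg b]
  obtain ⟨hb₁, hb₂⟩ : -1 ≤ b ∧ b ≤ 1 := by constructor <;> nlinarith [sq_nonneg a]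
  interval_cases a <;> interval_cases b <;> omega

theorem exists_card_pairsWithSum_pronic_le {ε : ℝ} (hε : 0 < ε) :
    ∃ C : ℝ, 0 < C ∧ ∀ (N : ℕ) (n : ℤ),
      (#(pairsWithSum (range N) (fun k : ℕ => (k * (k + 1) : ℤ)) n) : ℝ) ≤ C * (N : ℝ) ^ ε := by
  obtain ⟨C, hC, hdiv⟩ :=
    GaussianInt.exists_card_le_mul_rpow_of_dvd (δ := ε / 4) (by positivity)
  refine ⟨C * 16 ^ (ε / 4), by positivity, fun N n => ?_⟩
  set S := pairsWithSum (range N) (fun k : ℕ => (k * (k + 1) : ℤ)) n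
  rcases S.eq_empty_or_nonempty with hempty | ⟨⟨k, ℓ⟩, hkℓ⟩
  · rw [hempty, card_empty, Nat.cast_zero]
    positivity
  obtain ⟨hkℓN, rfl⟩ := mem_filter.mp hkℓ
  simp only [mem_product, mem_range] at hkℓN
  set M : ℤ := 2 * ((k : ℤ) * (k + 1) + (ℓ : ℤ) * (ℓ + 1)) + 1
  have hM0 : (M : GaussianInt) ≠ 0 := by
    rw [Ne, Int.cast_eq_zero]
    positivity
  have hdvd : ∀ p ∈ S, pronicFactor p.1 p.2 ∣ (M : GaussianInt) := fun p hp =>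
    Dvd.intro _ ((pronicFactor_mul_star p.1 p.2).trans (by rw [(mem_filter.mp hp).2]))
  have hM : (M : ℝ) * M ≤ 16 * (N : ℝ) ^ 4 := by
    have hk : (k : ℝ) + 1 ≤ N := by exact_mod_cast hkℓN.1
    have hℓ : (ℓ : ℝ) + 1 ≤ N := by exact_mod_cast hkℓN.2
    have : (M : ℝ) ≤ 4 * N ^ 2 := by
      push_cast [M]
      nlinarith
    nlinarith [show (0 : ℝ) ≤ M by positivity]
  calc (#S : ℝ) ≤ C * ((M : GaussianInt).norm.natAbs : ℝ) ^ (ε / 4) :=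
        hdiv _ hM0 hdvd fun p _ q _ hpq => Prod.ext_iff.mpr (eq_of_associated_pronicFactor hpq)
    _ = C * ((M : ℝ) * M) ^ (ε / 4) := by
        rw [GaussianInt.natCast_natAbs_norm, Zsqrtd.norm_intCast]
        push_cast
        rfl
    _ ≤ C * (16 * (N : ℝ) ^ 4) ^ (ε / 4) := by gcongr
    _ = C * 16 ^ (ε / 4) * (N : ℝ) ^ ε := by
        rw [mul_rpow (by norm_num) (by positivity), ← rpow_natCast,
          ← rpow_mul (by positivity)]
        ring_nf

theorem stmt_5 (ε : ℝ) (hε : 0 < ε) :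
    ∃ C : ℝ, 0 < C ∧ ∀ N : ℕ, 1 ≤ N → ∀ a : ℕ → ℂ,
      (∫ t in (0:ℝ)..(2*π),
          ‖∑ k ∈ Finset.range N, a k * Complex.exp (-Complex.I * t * (k * (k+1)))‖^4)
        ≤ C * (N : ℝ) ^ ε * (∑ k ∈ Finset.range N, ‖a k‖^2)^2 := by
  obtain ⟨C, hC, hreps⟩ := exists_card_pairsWithSum_pronic_le hε
  refine ⟨2 * π * C, by positivity, fun N _ a => ?_⟩
  have hbound := integral_norm_pow_four_sum_exp_le (range N) (fun k : ℕ => (k * (k + 1) : ℤ)) a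
    (hreps N)
  push_cast at hbound
  exact hbound.trans_eq (by ring)
end

section
/- There exist constants 0 < c ≤ C such that for every finitely supported complex sequence (c_k)_{k≥1}, c Σ_{k≥1} |c_k|² ≤ (1/2π) ∫_0^{2π} |Σ_{k≥1} c_k e^{i t √(k(k+1))}|² dt ≤ C Σ_{k≥1} |c_k|². -/
/-!
Since `√(k(k+1)) = k + 1/2 - εₖ` with `0 ≤ εₖ ≤ 1/(8k+2)`, the exponential sum `F(t)` is a small
perturbation of `G(t) = ∑ cₖ e^{it(k+1/2)}`, for which `∫₀^{2π} |G|² = 2π ∑ |cₖ|²` by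
orthogonality of `e^{ikt}`. Pointwise, `|e^{itλ} - e^{itμ}| ≤ |t| |λ - μ|`, so Cauchy–Schwarz gives
`∫₀^{2π} |F - G|² ≤ 2π (2π)² (∑ εₖ²) ∑ |cₖ|²`, and `∑ εₖ² ≤ 9/400` by telescoping.
Hence `‖F - G‖₂ ≤ δ ‖G‖₂` with `δ = 3π/10 < 1`, and `(1 - δ)² ≤ ‖F‖₂² / ‖G‖₂² ≤ (1 + δ)²`.
-/

open Complex Real MeasureTheory ComplexConjugate

lemma abs_sqrt_mul_add_one_sub_le {x : ℝ} (hx : 0 ≤ x) :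
    |√(x * (x + 1)) - (x + 1 / 2)| ≤ 1 / (8 * x + 2) := by
  set r := √(x * (x + 1))
  have hr_sq : r ^ 2 = x * (x + 1) := Real.sq_sqrt (by positivity)
  have hr_ge : x ≤ r := Real.le_sqrt_of_sq_le (by nlinarith)
  have hr_le : r ≤ x + 1 / 2 := Real.sqrt_le_iff.mpr ⟨by positivity, by nlinarith⟩
  rw [abs_sub_comm, abs_of_nonneg (by linarith), le_div_iff₀ (by positivity)]
  nlinarith

lemma sum_Icc_one_div_sq_le (N : ℕ) (hN : 1 ≤ N) :
    ∑ k ∈ Finset.Icc 1 N, (1 / (8 * (k : ℝ) + 2)) ^ 2 ≤ 9 / 400 - 1 / (64 * (N : ℝ) + 16) := by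
  induction N, hN using Nat.le_induction with
  | base => norm_num
  | succ N hN ih =>
    rw [Finset.sum_Icc_succ_top (by omega)]
    have hN' : (1 : ℝ) ≤ N := by exact_mod_cast hN
    -- telescoping: 1 / (8N + 10)² ≤ 1 / ((8N + 2)(8N + 10)) = 1 / (64N + 16) - 1 / (64N + 80)
    have step : (1 / (8 * ((N + 1 : ℕ) : ℝ) + 2)) ^ 2
        ≤ 1 / (64 * (N : ℝ) + 16) - 1 / (64 * ((N + 1 : ℕ) : ℝ) + 16) := by
      push_cast
      rw [div_pow, one_pow, div_sub_div _ _ (by positivity) (by positivity),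
        div_le_div_iff₀ (by positivity) (by positivity)]
      nlinarith
    linarith

lemma sum_one_div_sq_le {s : Finset ℕ} (hs : ∀ k ∈ s, 1 ≤ k) :
    ∑ k ∈ s, (1 / (8 * (k : ℝ) + 2)) ^ 2 ≤ 9 / 400 := by
  have hsub : s ⊆ Finset.Icc 1 (s.sup id + 1) := fun k hk =>
    Finset.mem_Icc.mpr ⟨hs k hk, (Finset.le_sup (f := id) hk).trans (Nat.le_succ _)⟩
  calc ∑ k ∈ s, (1 / (8 * (k : ℝ) + 2)) ^ 2
      ≤ ∑ k ∈ Finset.Icc 1 (s.sup id + 1), (1 / (8 * (k : ℝ) + 2)) ^ 2 :=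
        Finset.sum_le_sum_of_subset_of_nonneg hsub fun _ _ _ => by positivity
    _ ≤ 9 / 400 - 1 / (64 * ((s.sup id + 1 : ℕ) : ℝ) + 16) := sum_Icc_one_div_sq_le _ le_add_self
    _ ≤ 9 / 400 := sub_le_self _ (by positivity)

lemma sum_sq_sqrt_mul_add_one_sub_le {s : Finset ℕ} (hs : ∀ k ∈ s, 1 ≤ k) :
    ∑ k ∈ s, (√(k * (k + 1)) - ((k : ℝ) + 1 / 2)) ^ 2 ≤ 9 / 400 :=
  (Finset.sum_le_sum fun k _ => (sq_abs _).symm.trans_le <|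
    pow_le_pow_left₀ (abs_nonneg _) (abs_sqrt_mul_add_one_sub_le k.cast_nonneg) 2).trans
    (sum_one_div_sq_le hs)

lemma norm_exp_sub_exp_le (t ω ν : ℝ) :
    ‖exp (I * t * ω) - exp (I * t * ν)‖ ≤ |t| * |ω - ν| := by
  have factor : exp (I * t * ω) - exp (I * t * ν)
      = exp (I * ↑(t * ν)) * (exp (I * ↑(t * (ω - ν))) - 1) := by
    rw [mul_sub, mul_one, ← Complex.exp_add]
    push_cast
    ring_nf
  rw [factor, norm_mul, Complex.norm_exp_I_mul_ofReal, one_mul, ← abs_mul, ← Real.norm_eq_abs]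
  exact Real.norm_exp_I_mul_ofReal_sub_one_le

lemma norm_sum_exp_sub_sum_exp_sq_le {ι : Type*} (s : Finset ι) (c : ι → ℂ) (ω ν : ι → ℝ)
    (t : ℝ) :
    ‖∑ k ∈ s, c k * exp (I * t * ω k) - ∑ k ∈ s, c k * exp (I * t * ν k)‖ ^ 2
      ≤ t ^ 2 * (∑ k ∈ s, (ω k - ν k) ^ 2) * ∑ k ∈ s, ‖c k‖ ^ 2 := by
  have triangle : ‖∑ k ∈ s, c k * exp (I * t * ω k) - ∑ k ∈ s, c k * exp (I * t * ν k)‖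
      ≤ ∑ k ∈ s, ‖c k‖ * (|t| * |ω k - ν k|) := by
    rw [← Finset.sum_sub_distrib]
    refine (norm_sum_le _ _).trans (Finset.sum_le_sum fun k _ => ?_)
    rw [← mul_sub, norm_mul]
    exact mul_le_mul_of_nonneg_left (norm_exp_sub_exp_le t _ _) (norm_nonneg _)
  calc _ ≤ (∑ k ∈ s, ‖c k‖ * (|t| * |ω k - ν k|)) ^ 2 := by gcongr
    _ ≤ (∑ k ∈ s, ‖c k‖ ^ 2) * ∑ k ∈ s, (|t| * |ω k - ν k|) ^ 2 :=
        Finset.sum_mul_sq_le_sq_mul_sq _ _ _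
    _ = t ^ 2 * (∑ k ∈ s, (ω k - ν k) ^ 2) * ∑ k ∈ s, ‖c k‖ ^ 2 := by
        simp only [mul_pow, sq_abs, ← Finset.mul_sum]
        ring

lemma integral_norm_sq_sum_exp_sub_sum_exp_le {ι : Type*} (s : Finset ι) (c : ι → ℂ)
    (ω ν : ι → ℝ) {T : ℝ} (hT : 0 ≤ T) :
    ∫ t in (0 : ℝ)..T, ‖∑ k ∈ s, c k * exp (I * t * ω k) - ∑ k ∈ s, c k * exp (I * t * ν k)‖ ^ 2
      ≤ T * (T ^ 2 * (∑ k ∈ s, (ω k - ν k) ^ 2) * ∑ k ∈ s, ‖c k‖ ^ 2) := by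
  have hcont : Continuous fun t : ℝ =>
      ‖∑ k ∈ s, c k * exp (I * t * ω k) - ∑ k ∈ s, c k * exp (I * t * ν k)‖ ^ 2 := by
    fun_prop
  have pointwise : ∀ t ∈ Set.Icc 0 T,
      ‖∑ k ∈ s, c k * exp (I * t * ω k) - ∑ k ∈ s, c k * exp (I * t * ν k)‖ ^ 2
        ≤ T ^ 2 * (∑ k ∈ s, (ω k - ν k) ^ 2) * ∑ k ∈ s, ‖c k‖ ^ 2 := fun t ht => by
    have : t ^ 2 ≤ T ^ 2 := pow_le_pow_left₀ ht.1 ht.2 2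
    refine (norm_sum_exp_sub_sum_exp_sq_le s c ω ν t).trans ?_
    gcongr
  have bound := intervalIntegral.integral_mono_on hT (hcont.intervalIntegrable (μ := volume) _ _)
    intervalIntegrable_const pointwise
  rwa [intervalIntegral.integral_const, sub_zero, smul_eq_mul] at bound

lemma integral_exp_int_mul (m : ℤ) :
    ∫ t in (0 : ℝ)..2 * π, exp (I * m * t) = if m = 0 then (2 * π : ℂ) else 0 := by
  split_ifs with hm
  · simp [hm]
  · have hIm : I * m ≠ 0 := mul_ne_zero I_ne_zero (by exact_mod_cast hm)
    have period : exp (I * m * (2 * π)) = 1 := by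
      rw [show I * m * (2 * π) = m * (2 * π * I) by ring]
      exact exp_int_mul_two_pi_mul_I m
    simp [integral_exp_mul_complex hIm, period]

lemma norm_sq_sum_exp_eq {ι : Type*} (s : Finset ι) (c : ι → ℂ) (ω : ι → ℝ) (t : ℝ) :
    ((‖∑ k ∈ s, c k * exp (I * t * ω k)‖ ^ 2 : ℝ) : ℂ)
      = ∑ j ∈ s, ∑ k ∈ s, c j * conj (c k) * exp (I * ↑(ω j - ω k) * t) := by
  rw [Complex.ofReal_pow, ← Complex.mul_conj', map_sum, Finset.sum_mul_sum]
  refine Finset.sum_congr rfl fun j _ => Finset.sum_congr rfl fun k _ => ?_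
  simp only [map_mul, ← Complex.exp_conj, conj_I, conj_ofReal]
  rw [mul_mul_mul_comm, ← Complex.exp_add]
  push_cast
  ring_nf

lemma integral_norm_sq_sum_exp_int_add {ι : Type*} (s : Finset ι) (c : ι → ℂ) {n : ι → ℤ}
    (hn : Set.InjOn n s) (a : ℝ) :
    ∫ t in (0 : ℝ)..2 * π, ‖∑ k ∈ s, c k * exp (I * t * ↑((n k : ℝ) + a))‖ ^ 2
      = 2 * π * ∑ k ∈ s, ‖c k‖ ^ 2 := by
  apply Complex.ofReal_injective
  rw [← intervalIntegral.integral_ofReal]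
  have phase : ∀ j k, (((n j : ℝ) + a - ((n k : ℝ) + a) : ℝ) : ℂ) = ((n j - n k : ℤ) : ℂ) := by
    intro j k; push_cast; ring
  simp_rw [norm_sq_sum_exp_eq, phase]
  have integrable : ∀ j k, IntervalIntegrable
      (fun t : ℝ => c j * conj (c k) * exp (I * ↑(n j - n k) * t)) volume 0 (2 * π) :=
    fun j k => (by fun_prop : Continuous _).intervalIntegrable _ _
  rw [intervalIntegral.integral_finsetSum fun j _ =>
    Continuous.intervalIntegrable (by fun_prop) _ _]
  simp_rw [intervalIntegral.integral_finsetSum fun k _ => integrable _ k,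
    intervalIntegral.integral_const_mul, integral_exp_int_mul, sub_eq_zero]
  have diagonal : ∀ j ∈ s, ∑ k ∈ s, c j * conj (c k) * (if n j = n k then (2 * π : ℂ) else 0)
      = 2 * π * ((‖c j‖ ^ 2 : ℝ) : ℂ) := fun j hj => by
    rw [Finset.sum_eq_single_of_mem j hj fun k hk hkj => by
      rw [if_neg fun h => hkj (hn hj hk h).symm, mul_zero], if_pos rfl, Complex.ofReal_pow,
      Complex.mul_conj']
    ring
  rw [Finset.sum_congr rfl diagonal, ← Finset.mul_sum]
  norm_cast

lemma norm_sq_add_le {E : Type*} [SeminormedAddCommGroup E] (x y : E) {ε : ℝ} (hε : 0 < ε) :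
    ‖x + y‖ ^ 2 ≤ (1 + ε) * ‖x‖ ^ 2 + (1 + ε⁻¹) * ‖y‖ ^ 2 := by
  have amgm : 2 * ‖x‖ * ‖y‖ ≤ ε * ‖x‖ ^ 2 + ε⁻¹ * ‖y‖ ^ 2 := by
    have := sq_nonneg (ε * ‖x‖ - ‖y‖)
    rw [← mul_le_mul_iff_of_pos_left hε]
    field_simp
    nlinarith
  nlinarith [norm_add_le x y, norm_nonneg (x + y), norm_nonneg x, norm_nonneg y]

section

variable {α E : Type*} [MeasurableSpace α] {μ : Measure α} [NormedAddCommGroup E]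

lemma integral_norm_sq_add_le {f g : α → E} (hf : MemLp f 2 μ) (hg : MemLp g 2 μ) {ε : ℝ}
    (hε : 0 < ε) :
    ∫ x, ‖f x + g x‖ ^ 2 ∂μ ≤ (1 + ε) * ∫ x, ‖f x‖ ^ 2 ∂μ + (1 + ε⁻¹) * ∫ x, ‖g x‖ ^ 2 ∂μ := by
  have sq : ∀ {h : α → E}, MemLp h 2 μ → Integrable (fun x => ‖h x‖ ^ 2) μ :=
    fun h => h.integrable_norm_pow two_ne_zero
  rw [← integral_const_mul, ← integral_const_mul,
    ← integral_add ((sq hf).const_mul _) ((sq hg).const_mul _)]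
  exact integral_mono (sq (hf.add hg)) (((sq hf).const_mul _).add ((sq hg).const_mul _))
    fun x => norm_sq_add_le (f x) (g x) hε

lemma integral_norm_sq_mem_Icc_of_integral_norm_sq_sub_le {F G : α → E} (hF : MemLp F 2 μ)
    (hG : MemLp G 2 μ) {δ : ℝ} (hδ₀ : 0 < δ) (hδ₁ : δ < 1)
    (hFG : ∫ x, ‖F x - G x‖ ^ 2 ∂μ ≤ δ ^ 2 * ∫ x, ‖G x‖ ^ 2 ∂μ) :
    (1 - δ) ^ 2 * ∫ x, ‖G x‖ ^ 2 ∂μ ≤ ∫ x, ‖F x‖ ^ 2 ∂μ ∧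
      ∫ x, ‖F x‖ ^ 2 ∂μ ≤ (1 + δ) ^ 2 * ∫ x, ‖G x‖ ^ 2 ∂μ := by
  set A := ∫ x, ‖G x‖ ^ 2 ∂μ
  set D := ∫ x, ‖F x - G x‖ ^ 2 ∂μ
  have hδ' : 0 < 1 - δ := sub_pos.mpr hδ₁
  have hD : δ⁻¹ * D ≤ δ * A := by
    rw [inv_mul_le_iff₀ hδ₀]; linarith
  have upper := integral_norm_sq_add_le hG (hF.sub hG) hδ₀
  have lower := integral_norm_sq_add_le hF (hG.sub hF) (div_pos hδ₀ hδ')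
  simp only [Pi.sub_apply, add_sub_cancel] at upper lower
  simp only [norm_sub_rev (G _)] at lower
  -- with ε = δ / (1 - δ) the two weights become 1 / (1 - δ) and 1 / δ
  rw [show 1 + δ / (1 - δ) = (1 - δ)⁻¹ by field_simp; ring,
    show 1 + (δ / (1 - δ))⁻¹ = δ⁻¹ by field_simp; ring] at lower
  constructor
  · have : (1 - δ) * A ≤ (1 - δ)⁻¹ * ∫ x, ‖F x‖ ^ 2 ∂μ := by linarith
    calc (1 - δ) ^ 2 * A = (1 - δ) * ((1 - δ) * A) := by ring
      _ ≤ (1 - δ) * ((1 - δ)⁻¹ * ∫ x, ‖F x‖ ^ 2 ∂μ) := by gcongr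
      _ = ∫ x, ‖F x‖ ^ 2 ∂μ := by field_simp
  · calc ∫ x, ‖F x‖ ^ 2 ∂μ ≤ (1 + δ) * A + (1 + δ⁻¹) * D := upper
      _ = (1 + δ) * A + D + δ⁻¹ * D := by ring
      _ ≤ (1 + δ) * A + δ ^ 2 * A + δ * A := by gcongr
      _ = (1 + δ) ^ 2 * A := by ring

end

lemma Continuous.memLp_restrict_Ioc {E : Type*} [NormedAddCommGroup E] {f : ℝ → E}
    (hf : Continuous f) (a b : ℝ) (p : ENNReal) : MemLp f p (volume.restrict (Set.Ioc a b)) := by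
  obtain ⟨C, hC⟩ := (isCompact_Icc (a := a) (b := b)).exists_bound_of_continuousOn hf.continuousOn
  exact MemLp.of_bound hf.aestronglyMeasurable C
    (ae_restrict_of_forall_mem measurableSet_Ioc fun t ht => hC t (Set.Ioc_subset_Icc_self ht))

lemma integral_norm_sq_sum_exp_mem_Icc {ι : Type*} (s : Finset ι) (c : ι → ℂ) {n : ι → ℤ}
    (hn : Set.InjOn n s) (a : ℝ) (ω : ι → ℝ) {δ : ℝ} (hδ₀ : 0 < δ) (hδ₁ : δ < 1)
    (hω : (2 * π) ^ 2 * ∑ k ∈ s, (ω k - ((n k : ℝ) + a)) ^ 2 ≤ δ ^ 2) :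
    (1 - δ) ^ 2 * (2 * π * ∑ k ∈ s, ‖c k‖ ^ 2)
        ≤ ∫ t in (0 : ℝ)..2 * π, ‖∑ k ∈ s, c k * exp (I * t * ω k)‖ ^ 2 ∧
      ∫ t in (0 : ℝ)..2 * π, ‖∑ k ∈ s, c k * exp (I * t * ω k)‖ ^ 2
        ≤ (1 + δ) ^ 2 * (2 * π * ∑ k ∈ s, ‖c k‖ ^ 2) := by
  set ν : ι → ℝ := fun k => (n k : ℝ) + a
  have h2π : 0 < 2 * π := by positivity
  have hG := integral_norm_sq_sum_exp_int_add s c hn a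
  have hD := (integral_norm_sq_sum_exp_sub_sum_exp_le s c ω ν h2π.le).trans <|
    calc 2 * π * ((2 * π) ^ 2 * (∑ k ∈ s, (ω k - ν k) ^ 2) * ∑ k ∈ s, ‖c k‖ ^ 2)
        ≤ 2 * π * (δ ^ 2 * ∑ k ∈ s, ‖c k‖ ^ 2) := by gcongr
      _ = δ ^ 2 * (2 * π * ∑ k ∈ s, ‖c k‖ ^ 2) := by ring
  rw [← hG] at hD ⊢
  simp only [intervalIntegral.integral_of_le h2π.le] at hD ⊢
  exact integral_norm_sq_mem_Icc_of_integral_norm_sq_sub_le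
    (Continuous.memLp_restrict_Ioc (by fun_prop) _ _ _)
    (Continuous.memLp_restrict_Ioc (by fun_prop) _ _ _) hδ₀ hδ₁ hD

theorem stmt_8 :
    ∃ c C : ℝ, 0 < c ∧ c ≤ C ∧
      ∀ (s : Finset ℕ) (cf : ℕ → ℂ), (∀ k ∈ s, 1 ≤ k) →
        (c * ∑ k ∈ s, ‖cf k‖^2
          ≤ (1/(2*π)) * ∫ t in (0:ℝ)..(2*π),
              ‖∑ k ∈ s, cf k * Complex.exp (Complex.I * t * Real.sqrt (k * (k+1)))‖^2) ∧
        ((1/(2*π)) * (∫ t in (0:ℝ)..(2*π),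
              ‖∑ k ∈ s, cf k * Complex.exp (Complex.I * t * Real.sqrt (k * (k+1)))‖^2)
          ≤ C * ∑ k ∈ s, ‖cf k‖^2) := by
  set δ := 3 * π / 10 with hδ
  have hδ₀ : 0 < δ := by positivity
  have hδ₁ : δ < 1 := by rw [hδ]; linarith [pi_lt_d2]
  refine ⟨(1 - δ) ^ 2, (1 + δ) ^ 2, pow_pos (sub_pos.mpr hδ₁) 2,
    pow_le_pow_left₀ (by linarith) (by linarith) 2, fun s cf hs => ?_⟩
  have hω : (2 * π) ^ 2 * ∑ k ∈ s, (√(k * (k + 1)) - (((k : ℤ) : ℝ) + 1 / 2)) ^ 2 ≤ δ ^ 2 :=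
    calc _ ≤ (2 * π) ^ 2 * (9 / 400) := by
          gcongr
          simpa only [Int.cast_natCast] using sum_sq_sqrt_mul_add_one_sub_le hs
      _ = δ ^ 2 := by rw [hδ]; ring
  obtain ⟨hlo, hup⟩ := integral_norm_sq_sum_exp_mem_Icc s cf Nat.cast_injective.injOn (1 / 2)
    (fun k : ℕ => √(k * (k + 1))) hδ₀ hδ₁ hω
  have h2π : 0 < 2 * π := by positivity
  constructor
  · rw [one_div, ← div_eq_inv_mul, le_div_iff₀ h2π]; linarith
  · rw [one_div, ← div_eq_inv_mul, div_le_iff₀ h2π]; linarith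
end

section
/- For every ε > 0 there is a constant C(ε) such that for all integers m ≥ 0, all N ≥ 1, and all integers u, v, the number of triples (j,k,ℓ) ∈ {0,…,N−1}³ with j+k+ℓ = u and j(j+m)+k(k+m)+ℓ(ℓ+m) = v is at most C(ε) N^ε. -/
/-!
Writing `ℓ = u - j - k`, a solution `(j, k, ℓ)` is determined by `(x, y) = (3(j + k) - 2u, j - k)`,
which satisfies `x² + 3y² = M` with `M = 6(v - mu) - 2u² ≤ 18N²`. So it suffices to show that
`M` has `O_ε(M^ε)` representations by `x² + 3y²`. Dividing out `gcd(x, y)` reduces this to primitive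
representations of `M / g²`. A primitive representation gives a square root `x / y` of `-3` modulo
`M`, and at most the two representations `±(x, y)` give the same root, because `M` then divides
`xy' - x'y`, whose square is less than `M²`. Modulo a prime power `p^a`, `-3` has at most
`4 ≤ (a + 1)²` square roots, so by the Chinese remainder theorem at most `d(M)²` modulo `M`. Hence
there are at most `2 d(M)³` representations, and the divisor bound `d(M) = O_ε(M^ε)` finishes.
-/

open Finset Filter

lemma exists_add_one_le_mul_rpow_pow {ε : ℝ} (hε : 0 < ε) :
    ∃ C : ℝ, 1 ≤ C ∧ ∀ a : ℕ, (a + 1 : ℝ) ≤ C * ((2 : ℝ) ^ ε) ^ a := by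
  set x := (2 : ℝ) ^ ε - 1
  have hx : 0 < x := sub_pos.mpr (Real.one_lt_rpow (by norm_num) hε)
  refine ⟨1 + 1 / x, by simp [hx.le], fun a => ?_⟩
  have hxa : 1 / x * (a * x) = a := by field_simp
  have hexpand : (1 + 1 / x) * (1 + a * x) = a + 1 + (a * x + 1 / x) := by
    linear_combination hxa
  calc (a + 1 : ℝ) ≤ (1 + 1 / x) * (1 + a * x) := by
        rw [hexpand]; exact le_add_of_nonneg_right (by positivity)
    _ ≤ (1 + 1 / x) * (1 + x) ^ a := by gcongr; exact one_add_mul_le_pow (by linarith) a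
    _ = (1 + 1 / x) * ((2 : ℝ) ^ ε) ^ a := by rw [add_sub_cancel]

lemma Nat.cast_rpow_eq_prod_primeFactors {n : ℕ} (hn : n ≠ 0) (ε : ℝ) :
    (n : ℝ) ^ ε = ∏ p ∈ n.primeFactors, ((p : ℝ) ^ ε) ^ n.factorization p := by
  conv_lhs => rw [← Nat.prod_factorization_pow_eq_self hn]
  rw [Finsupp.prod, Nat.support_factorization, Nat.cast_prod,
    ← Real.finsetProd_rpow _ _ (fun _ _ => by positivity)]
  refine prod_congr rfl fun p _ => ?_
  rw [Nat.cast_pow, Real.rpow_pow_comm (by positivity)]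

theorem exists_card_divisors_le_mul_rpow {ε : ℝ} (hε : 0 < ε) :
    ∃ C : ℝ, 0 < C ∧ ∀ n : ℕ, (#n.divisors : ℝ) ≤ C * (n : ℝ) ^ ε := by
  obtain ⟨C, hC, hsucc⟩ := exists_add_one_le_mul_rpow_pow hε
  obtain ⟨T, hT⟩ : ∃ T : ℕ, ∀ p ≥ T, (2 : ℝ) ≤ (p : ℝ) ^ ε := eventually_atTop.mp <|
    ((tendsto_rpow_atTop hε).comp tendsto_natCast_atTop_atTop).eventually_ge_atTop 2
  refine ⟨C ^ T, by positivity, fun n => ?_⟩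
  rcases eq_or_ne n 0 with rfl | hn
  · simp [Real.zero_rpow hε.ne']
  -- primes `p ≥ T` contribute a factor at most `1`, the fewer than `T` others at most `C`
  have hfactor : ∀ p ∈ n.primeFactors, ((n.factorization p + 1 : ℕ) : ℝ) ≤
      (if p < T then C else 1) * ((p : ℝ) ^ ε) ^ n.factorization p := by
    intro p hp
    have h2p : (2 : ℝ) ≤ p := by exact_mod_cast (Nat.prime_of_mem_primeFactors hp).two_le
    push_cast
    split_ifs with hpT
    · calc _ ≤ C * ((2 : ℝ) ^ ε) ^ n.factorization p := hsucc _
        _ ≤ C * ((p : ℝ) ^ ε) ^ n.factorization p := by gcongr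
    · calc _ ≤ (2 : ℝ) ^ n.factorization p := by
            exact_mod_cast Nat.lt_two_pow_self
        _ ≤ 1 * ((p : ℝ) ^ ε) ^ n.factorization p := by
            rw [one_mul]; gcongr; exact hT p (not_lt.mp hpT)
  have hsmall : #{p ∈ n.primeFactors | p < T} ≤ T :=
    (card_le_card fun p hp => mem_range.mpr (mem_filter.mp hp).2).trans (card_range T).le
  calc (#n.divisors : ℝ) = ∏ p ∈ n.primeFactors, ((n.factorization p + 1 : ℕ) : ℝ) := by
        rw [Nat.card_divisors hn, Nat.cast_prod]
    _ ≤ ∏ p ∈ n.primeFactors, (if p < T then C else 1) * ((p : ℝ) ^ ε) ^ n.factorization p :=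
        prod_le_prod (fun _ _ => by positivity) hfactor
    _ = C ^ #{p ∈ n.primeFactors | p < T} * (n : ℝ) ^ ε := by
        rw [prod_mul_distrib, ← prod_filter, prod_const, Nat.cast_rpow_eq_prod_primeFactors hn]
    _ ≤ C ^ T * (n : ℝ) ^ ε := by gcongr

noncomputable def numSqrt (n : ℕ) (c : ℤ) : ℕ := Nat.card {s : ZMod n // s ^ 2 = c}

lemma numSqrt_eq_card_filter (n : ℕ) [NeZero n] (c : ℤ) :
    numSqrt n c = #{s : ZMod n | s ^ 2 = c} := by
  rw [numSqrt, Nat.card_eq_fintype_card, Fintype.card_subtype]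

lemma numSqrt_le_card (n : ℕ) [NeZero n] (c : ℤ) : numSqrt n c ≤ n := by
  rw [numSqrt_eq_card_filter]
  exact (card_filter_le _ _).trans (ZMod.card n).le

lemma numSqrt_mul {m n : ℕ} (h : m.Coprime n) (c : ℤ) :
    numSqrt (m * n) c = numSqrt m c * numSqrt n c := by
  rw [numSqrt, numSqrt, numSqrt, ← Nat.card_prod]
  refine Nat.card_congr <| ((ZMod.chineseRemainder h).toEquiv.subtypeEquiv fun s => ?_).trans
    Equiv.subtypeProdEquivProd
  rw [← (ZMod.chineseRemainder h).injective.eq_iff, map_pow, map_intCast, Prod.ext_iff]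
  simp

lemma Int.prime_pow_dvd_two_mul_sub_or_add {p : ℕ} (hp : p.Prime) {a : ℕ} {s t : ℤ}
    (hs : ¬ (p : ℤ) ∣ s) (h : (p : ℤ) ^ a ∣ s ^ 2 - t ^ 2) :
    (p : ℤ) ^ a ∣ 2 * (s - t) ∨ (p : ℤ) ^ a ∣ 2 * (s + t) := by
  have hpZ : Prime (p : ℤ) := Nat.prime_iff_prime_int.mp hp
  rw [show s ^ 2 - t ^ 2 = (s - t) * (s + t) by ring] at h
  rcases hp.eq_two_or_odd with rfl | hodd
  · push_cast at hs h ⊢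
    rcases Nat.eq_zero_or_pos a with rfl | ha
    · simp
    have ht : ¬ (2 : ℤ) ∣ t := by
      rcases Int.prime_two.dvd_or_dvd ((dvd_pow_self _ ha.ne').trans h) with h' | h' <;> omega
    obtain ⟨d, hd⟩ : ∃ d, s - t = 2 * d := ⟨(s - t) / 2, by omega⟩
    obtain ⟨e, he⟩ : ∃ e, s + t = 2 * e := ⟨(s + t) / 2, by omega⟩
    rw [hd, he] at h ⊢
    -- `d + e = s` is odd, so one of `d`, `e` is odd
    by_cases hd2 : (2 : ℤ) ∣ d
    · have he2 : ¬ (2 : ℤ) ∣ e := by omega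
      left
      refine (Int.prime_two.coprime_iff_not_dvd.mpr he2).pow_left.dvd_of_dvd_mul_right
        (z := e) (h.trans (dvd_of_eq (by ring)))
    · right
      refine (Int.prime_two.coprime_iff_not_dvd.mpr hd2).pow_left.dvd_of_dvd_mul_left
        (y := d) (h.trans (dvd_of_eq (by ring)))
  · have h2 : ¬ (p : ℤ) ∣ 2 := by
      intro h2
      have := Nat.le_of_dvd two_pos (by exact_mod_cast h2 : p ∣ 2)
      have := hp.two_le
      omega
    by_cases hst : (p : ℤ) ∣ s - t
    · left
      have hst' : ¬ (p : ℤ) ∣ s + t := fun h' => hs <|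
        (hpZ.dvd_or_dvd (by convert dvd_add hst h' using 1; ring)).resolve_left h2
      exact ((hpZ.coprime_iff_not_dvd.mpr hst').pow_left.dvd_of_dvd_mul_right h).mul_left 2
    · right
      exact ((hpZ.coprime_iff_not_dvd.mpr hst).pow_left.dvd_of_dvd_mul_left h).mul_left 2

lemma ZMod.two_mul_sub_eq_zero_or_two_mul_add_eq_zero {p : ℕ} (hp : p.Prime) {a : ℕ} (ha : 0 < a)
    {c : ℤ} (hc : ¬ (p : ℤ) ∣ c) {s t : ZMod (p ^ a)} (hs : s ^ 2 = c) (ht : t ^ 2 = c) :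
    2 * (s - t) = 0 ∨ 2 * (s + t) = 0 := by
  obtain ⟨s, rfl⟩ := ZMod.intCast_surjective s
  obtain ⟨t, rfl⟩ := ZMod.intCast_surjective t
  have hps : ¬ (p : ℤ) ∣ s := by
    intro hps
    have hsc : ((p ^ a : ℕ) : ℤ) ∣ s ^ 2 - c :=
      (ZMod.intCast_zmod_eq_zero_iff_dvd _ _).mp (by push_cast; rw [hs, sub_self])
    refine hc ((dvd_sub_right (dvd_pow hps two_ne_zero)).mp ?_)
    exact (dvd_pow_self _ ha.ne').trans (by exact_mod_cast hsc)
  have hst : ((p ^ a : ℕ) : ℤ) ∣ s ^ 2 - t ^ 2 :=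
    (ZMod.intCast_zmod_eq_zero_iff_dvd _ _).mp (by push_cast; rw [hs, ht, sub_self])
  push_cast at hst
  rcases Int.prime_pow_dvd_two_mul_sub_or_add hp hps hst with h | h
  · left
    exact_mod_cast (ZMod.intCast_zmod_eq_zero_iff_dvd _ _).mpr (by exact_mod_cast h)
  · right
    exact_mod_cast (ZMod.intCast_zmod_eq_zero_iff_dvd _ _).mpr (by exact_mod_cast h)

lemma numSqrt_prime_pow_le_four {p : ℕ} (hp : p.Prime) (a : ℕ) {c : ℤ} (hc : ¬ (p : ℤ) ∣ c) :
    numSqrt (p ^ a) c ≤ 4 := by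
  have : NeZero (p ^ a) := ⟨pow_ne_zero _ hp.ne_zero⟩
  rcases Nat.eq_zero_or_pos a with rfl | ha
  · exact (numSqrt_le_card _ c).trans (by simp)
  rw [numSqrt_eq_card_filter]
  rcases ({s : ZMod (p ^ a) | s ^ 2 = c} : Finset _).eq_empty_or_nonempty with h | ⟨t, ht⟩
  · simp [h]
  rw [mem_filter] at ht
  set K : Finset (ZMod (p ^ a)) := {k | 2 • k = 0}
  have hK : #K ≤ 2 := by
    convert IsAddCyclic.card_nsmul_eq_zero_le (α := ZMod (p ^ a)) two_pos
  have hsub : ({s : ZMod (p ^ a) | s ^ 2 = c} : Finset _) ⊆ K.image (· + t) ∪ K.image (· - t) := by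
    intro s hs
    rw [mem_filter] at hs
    simp only [mem_union, mem_image, K, mem_filter, mem_univ, true_and, two_nsmul, ← two_mul]
    rcases ZMod.two_mul_sub_eq_zero_or_two_mul_add_eq_zero hp ha hc hs.2 ht.2 with h | h
    · exact Or.inl ⟨s - t, h, sub_add_cancel s t⟩
    · exact Or.inr ⟨s + t, h, add_sub_cancel_right s t⟩
  calc _ ≤ #(K.image (· + t) ∪ K.image (· - t)) := card_le_card hsub
    _ ≤ #K + #K := (card_union_le _ _).trans (add_le_add card_image_le card_image_le)
    _ ≤ 4 := by omega

lemma numSqrt_three_pow_neg_three_le_four (a : ℕ) : numSqrt (3 ^ a) (-3) ≤ 4 := by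
  rcases le_or_gt a 1 with ha | ha
  · exact (numSqrt_le_card _ _).trans (by interval_cases a <;> norm_num)
  · -- `-3` is not a square modulo `9`
    have : IsEmpty {s : ZMod (3 ^ a) // s ^ 2 = (-3 : ℤ)} := by
      refine ⟨fun ⟨s, hs⟩ => ?_⟩
      have h9 := congrArg (ZMod.castHom (pow_dvd_pow 3 ha) (ZMod (3 ^ 2))) hs
      rw [map_pow, map_intCast] at h9
      exact (by decide : ∀ x : ZMod (3 ^ 2), x ^ 2 ≠ (-3 : ℤ)) _ h9
    rw [numSqrt, Nat.card_of_isEmpty]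
    omega

lemma numSqrt_neg_three_le_sq_card_divisors {n : ℕ} (hn : n ≠ 0) :
    numSqrt n (-3) ≤ #n.divisors ^ 2 := by
  induction n using Nat.recOnPosPrimePosCoprime with
  | prime_pow p a hp ha =>
    have h4 : numSqrt (p ^ a) (-3) ≤ 4 := by
      by_cases hp3 : p = 3
      · exact hp3 ▸ numSqrt_three_pow_neg_three_le_four a
      · refine numSqrt_prime_pow_le_four hp a ?_
        rw [dvd_neg]
        exact_mod_cast fun h => hp3 ((Nat.prime_dvd_prime_iff_eq hp Nat.prime_three).mp h)
    rw [Nat.divisors_prime_pow hp, card_map, card_range]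
    nlinarith
  | zero => contradiction
  | one => simpa using numSqrt_le_card 1 (-3)
  | coprime a b _ _ hab iha ihb =>
    rw [numSqrt_mul hab, Nat.Coprime.card_divisors_mul hab, mul_pow]
    exact Nat.mul_le_mul (iha (by omega)) (ihb (by omega))

lemma sq_add_three_mul_sq_eq_zero {x y : ℤ} : x ^ 2 + 3 * y ^ 2 = 0 ↔ x = 0 ∧ y = 0 := by
  constructor
  · intro h
    constructor <;> nlinarith [sq_nonneg x, sq_nonneg y]
  · rintro ⟨rfl, rfl⟩
    norm_num

namespace SqAddThreeSq

noncomputable def reps (M : ℕ) : Finset (ℤ × ℤ) :=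
  {q ∈ Icc (-M : ℤ) M ×ˢ Icc (-M : ℤ) M | q.1 ^ 2 + 3 * q.2 ^ 2 = M}

@[simp]
lemma mem_reps {M : ℕ} {q : ℤ × ℤ} : q ∈ reps M ↔ q.1 ^ 2 + 3 * q.2 ^ 2 = M := by
  refine ⟨fun h => (mem_filter.mp h).2, fun h => mem_filter.mpr ⟨?_, h⟩⟩
  have h1 := Int.natAbs_le_self_sq q.1
  have h2 := Int.natAbs_le_self_sq q.2
  simp only [mem_product, mem_Icc]
  omega

lemma card_reps_zero : #(reps 0) = 1 := by
  rw [card_eq_one]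
  exact ⟨0, by ext q; simp [sq_add_three_mul_sq_eq_zero, Prod.ext_iff]⟩

lemma isUnit_of_mem_reps {M : ℕ} {q : ℤ × ℤ} (hq : q ∈ reps M) (hcop : q.1.gcd q.2 = 1) :
    IsUnit (q.2 : ZMod M) := by
  have hyM : IsCoprime q.2 (M : ℤ) := by
    have := (Int.isCoprime_iff_gcd_eq_one.mpr hcop).symm.pow_right (n := 2)
      |>.add_mul_left_right (3 * q.2)
    rwa [show q.1 ^ 2 + q.2 * (3 * q.2) = M by linear_combination mem_reps.mp hq] at this
  obtain ⟨a, b, hab⟩ := hyM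
  refine IsUnit.of_mul_eq_one_right (a : ZMod M) ?_
  simpa using congrArg (Int.cast : ℤ → ZMod M) hab

lemma eq_or_eq_neg_of_mem_reps {M : ℕ} (hM : M ≠ 0) {q q' : ℤ × ℤ} (hq : q ∈ reps M)
    (hq' : q' ∈ reps M) (hdvd : (M : ℤ) ∣ q.1 * q'.2 - q'.1 * q.2) : q' = q ∨ q' = -q := by
  obtain ⟨x, y⟩ := q
  obtain ⟨x', y'⟩ := q'
  simp only [mem_reps] at hq hq' hdvd
  set D := x * y' - x' * y
  set P := x * x' + 3 * y * y'
  -- the norm form of ℤ[√-3] is multiplicative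
  have hnorm : P ^ 2 + 3 * D ^ 2 = (M : ℤ) ^ 2 := by
    linear_combination (x' ^ 2 + 3 * y' ^ 2) * hq + M * hq'
  have hMpos : (0 : ℤ) < M := by omega
  have hD : D = 0 := Int.eq_zero_of_abs_lt_dvd hdvd <| by
    by_contra! h
    nlinarith [abs_mul_abs_self D, sq_nonneg P]
  rcases sq_eq_sq_iff_eq_or_eq_neg.mp (show P ^ 2 = (M : ℤ) ^ 2 by simpa [hD] using hnorm)
    with hP | hP
  · left
    have := sq_add_three_mul_sq_eq_zero.mp
      (show (x' - x) ^ 2 + 3 * (y' - y) ^ 2 = 0 by linear_combination hq + hq' - 2 * hP)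
    simp only [Prod.ext_iff]
    omega
  · right
    have := sq_add_three_mul_sq_eq_zero.mp
      (show (x' + x) ^ 2 + 3 * (y' + y) ^ 2 = 0 by linear_combination hq + hq' + 2 * hP)
    simp only [Prod.ext_iff, Prod.fst_neg, Prod.snd_neg]
    omega

lemma card_primitive_reps_le {M : ℕ} (hM : M ≠ 0) :
    #{q ∈ reps M | q.1.gcd q.2 = 1} ≤ 2 * numSqrt M (-3) := by
  have : NeZero M := ⟨hM⟩
  set P := {q ∈ reps M | q.1.gcd q.2 = 1}
  let root : ℤ × ℤ → ZMod M := fun q => q.1 * (q.2 : ZMod M)⁻¹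
  have hP : ∀ q ∈ P, q ∈ reps M ∧ (q.1 : ZMod M) = root q * q.2 := fun q hq => by
    obtain ⟨hq, hcop⟩ := mem_filter.mp hq
    refine ⟨hq, ?_⟩
    rw [mul_assoc, ZMod.inv_mul_of_unit _ (isUnit_of_mem_reps hq hcop), mul_one]
  have hroot : ∀ q ∈ P, root q ^ 2 = (-3 : ℤ) := by
    intro q hqP
    obtain ⟨hq, hx⟩ := hP q hqP
    have hq' := congrArg (Int.cast : ℤ → ZMod M) (mem_reps.mp hq)
    push_cast at hq'
    rw [hx, ZMod.natCast_self] at hq'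
    have hy := ZMod.mul_inv_of_unit _ (isUnit_of_mem_reps hq (mem_filter.mp hqP).2)
    push_cast
    linear_combination ((q.2 : ZMod M)⁻¹) ^ 2 * hq' -
      (root q ^ 2 + 3) * (1 + (q.2 : ZMod M) * (q.2 : ZMod M)⁻¹) * hy
  have hfiber : ∀ r ∈ P.image root, #{q ∈ P | root q = r} ≤ 2 := by
    intro r hr
    obtain ⟨q₀, hq₀, rfl⟩ := mem_image.mp hr
    refine (card_le_card (t := {q₀, -q₀}) fun q hq => ?_).trans card_le_two
    obtain ⟨hqP, hq⟩ := mem_filter.mp hq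
    obtain ⟨hq₀M, hx₀⟩ := hP q₀ hq₀
    obtain ⟨hqM, hx⟩ := hP q hqP
    have hdvd : (M : ℤ) ∣ q₀.1 * q.2 - q.1 * q₀.2 := by
      rw [← ZMod.intCast_zmod_eq_zero_iff_dvd]
      push_cast
      rw [hx₀, hx, hq]
      ring
    rcases eq_or_eq_neg_of_mem_reps hM hq₀M hqM hdvd with h | h <;> simp [h]
  calc #P ≤ 2 * #(P.image root) := card_le_mul_card_image P 2 hfiber
    _ ≤ 2 * numSqrt M (-3) := by
      rw [numSqrt_eq_card_filter]
      gcongr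
      intro r hr
      obtain ⟨q, hq, rfl⟩ := mem_image.mp hr
      exact mem_filter.mpr ⟨mem_univ _, hroot q hq⟩

lemma gcd_sq_dvd_of_mem_reps {M : ℕ} {q : ℤ × ℤ} (hq : q ∈ reps M) : q.1.gcd q.2 ^ 2 ∣ M := by
  have h1 := pow_dvd_pow_of_dvd (Int.gcd_dvd_left q.1 q.2) 2
  have h2 := pow_dvd_pow_of_dvd (Int.gcd_dvd_right q.1 q.2) 2
  have h : ((q.1.gcd q.2 : ℕ) : ℤ) ^ 2 ∣ M := mem_reps.mp hq ▸ dvd_add h1 (h2.mul_left 3)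
  exact_mod_cast h

lemma card_reps_filter_gcd_le {M : ℕ} (hM : M ≠ 0) (g : ℕ) :
    #{q ∈ reps M | q.1.gcd q.2 = g} ≤ 2 * #M.divisors ^ 2 := by
  rcases eq_empty_or_nonempty {q ∈ reps M | q.1.gcd q.2 = g} with h | ⟨q₀, hq₀⟩
  · rw [h, card_empty]
    exact Nat.zero_le _
  obtain ⟨hq₀, hg⟩ := mem_filter.mp hq₀
  obtain ⟨M', hM'⟩ := hg ▸ gcd_sq_dvd_of_mem_reps hq₀
  have hg0 : (g : ℤ) ≠ 0 := by
    rintro hg0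
    exact hM (by simpa [Nat.cast_eq_zero.mp hg0] using hM')
  have hM'0 : M' ≠ 0 := by
    rintro rfl
    exact hM (hM'.trans (mul_zero _))
  have hdiv : ∀ q ∈ ({q ∈ reps M | q.1.gcd q.2 = g} : Finset _),
      q.1 = g * (q.1 / g) ∧ q.2 = g * (q.2 / g) := by
    intro q hq
    have hqg := (mem_filter.mp hq).2
    exact ⟨(Int.mul_ediv_cancel' (hqg ▸ Int.gcd_dvd_left _ _)).symm,
      (Int.mul_ediv_cancel' (hqg ▸ Int.gcd_dvd_right _ _)).symm⟩
  calc _ ≤ #{q ∈ reps M' | q.1.gcd q.2 = 1} := by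
        refine card_le_card_of_injOn (fun q => (q.1 / g, q.2 / g)) (fun q hq => ?_) ?_
        · obtain ⟨hqM, hqg⟩ := mem_filter.mp hq
          obtain ⟨hx, hy⟩ := hdiv q hq
          refine mem_filter.mpr ⟨mem_reps.mpr ?_, ?_⟩
          · have h := mem_reps.mp hqM
            rw [hx, hy, hM'] at h
            push_cast at h
            exact mul_left_cancel₀ (pow_ne_zero 2 hg0) (by linear_combination h)
          · exact hqg ▸ Int.gcd_div_gcd_div_gcd (by omega)
        · intro q hq q' hq' h
          rw [Prod.mk.injEq] at h
          rw [Prod.ext_iff, (hdiv q hq).1, (hdiv q hq).2, (hdiv q' hq').1, (hdiv q' hq').2,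
            h.1, h.2]
          simp
    _ ≤ 2 * numSqrt M' (-3) := card_primitive_reps_le hM'0
    _ ≤ 2 * #M'.divisors ^ 2 := by gcongr; exact numSqrt_neg_three_le_sq_card_divisors hM'0
    _ ≤ 2 * #M.divisors ^ 2 := by
        gcongr
        exact Dvd.intro_left _ hM'.symm

lemma card_reps_le {M : ℕ} (hM : M ≠ 0) : #(reps M) ≤ 2 * #M.divisors ^ 3 := by
  have hgcd : ∀ q ∈ reps M, q.1.gcd q.2 ∈ M.divisors := fun q hq =>
    Nat.mem_divisors.mpr ⟨(dvd_pow_self _ two_ne_zero).trans (gcd_sq_dvd_of_mem_reps hq), hM⟩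
  calc #(reps M) = ∑ g ∈ M.divisors, #{q ∈ reps M | q.1.gcd q.2 = g} :=
        card_eq_sum_card_fiberwise hgcd
    _ ≤ ∑ _g ∈ M.divisors, 2 * #M.divisors ^ 2 := sum_le_sum fun g _ => card_reps_filter_gcd_le hM g
    _ = 2 * #M.divisors ^ 3 := by rw [sum_const, smul_eq_mul]; ring

lemma exists_card_reps_le_mul_rpow {ε : ℝ} (hε : 0 < ε) :
    ∃ C : ℝ, 0 < C ∧ ∀ M : ℕ, (#(reps M) : ℝ) ≤ C * ((M : ℝ) + 1) ^ ε := by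
  obtain ⟨C, hC, hdiv⟩ := exists_card_divisors_le_mul_rpow (div_pos hε three_pos)
  refine ⟨2 * C ^ 3 + 1, by positivity, fun M => ?_⟩
  have hM1 : 1 ≤ ((M : ℝ) + 1) ^ ε := Real.one_le_rpow (by linarith [M.cast_nonneg (α := ℝ)]) hε.le
  rcases eq_or_ne M 0 with rfl | hM
  · rw [card_reps_zero, Nat.cast_one]
    nlinarith [pow_pos hC 3]
  calc (#(reps M) : ℝ) ≤ 2 * (#M.divisors : ℝ) ^ 3 := by exact_mod_cast card_reps_le hM
    _ ≤ 2 * (C * (M : ℝ) ^ (ε / 3)) ^ 3 := by gcongr; exact hdiv M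
    _ = 2 * C ^ 3 * (M : ℝ) ^ ε := by
        rw [mul_pow, ← Real.rpow_mul_natCast M.cast_nonneg]
        ring_nf
    _ ≤ (2 * C ^ 3 + 1) * ((M : ℝ) + 1) ^ ε := by
        gcongr
        · linarith
        · linarith

end SqAddThreeSq

open SqAddThreeSq

def solutionTriples (N m : ℕ) (u v : ℤ) : Finset (ℕ × ℕ × ℕ) :=
  (range N ×ˢ range N ×ˢ range N).filter (fun p => (p.1 : ℤ) + p.2.1 + p.2.2 = u ∧
    (p.1 : ℤ) * (p.1 + m) + p.2.1 * (p.2.1 + m) + p.2.2 * (p.2.2 + m) = v)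

lemma mem_solutionTriples {N m : ℕ} {u v : ℤ} {p : ℕ × ℕ × ℕ} :
    p ∈ solutionTriples N m u v ↔ (p.1 < N ∧ p.2.1 < N ∧ p.2.2 < N) ∧
      (p.1 : ℤ) + p.2.1 + p.2.2 = u ∧ (p.1 : ℤ) ^ 2 + p.2.1 ^ 2 + p.2.2 ^ 2 = v - m * u := by
  simp only [solutionTriples, mem_filter, mem_product, mem_range]
  refine and_congr_right fun _ => ⟨fun ⟨h1, h2⟩ => ⟨h1, ?_⟩, fun ⟨h1, h2⟩ => ⟨h1, ?_⟩⟩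
  · linear_combination h2 - m * h1
  · linear_combination h2 + m * h1

lemma exists_card_solutionTriples_le_card_reps (N m : ℕ) (u v : ℤ) :
    ∃ M : ℕ, M ≤ 18 * N ^ 2 ∧ #(solutionTriples N m u v) ≤ #(reps M) := by
  set S := solutionTriples N m u v
  rcases S.eq_empty_or_nonempty with h | ⟨t, ht⟩
  · exact ⟨0, Nat.zero_le _, by simp [h]⟩
  -- eliminating `ℓ = u - j - k` leaves a binary quadratic equation in `j + k` and `j - k`
  have hquad : ∀ p ∈ S, (3 * ((p.1 : ℤ) + p.2.1) - 2 * u) ^ 2 + 3 * ((p.1 : ℤ) - p.2.1) ^ 2 =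
      6 * (v - m * u) - 2 * u ^ 2 := by
    intro p hp
    obtain ⟨-, h1, h2⟩ := mem_solutionTriples.mp hp
    linear_combination 6 * h2 + 6 * (p.1 + p.2.1 - u - p.2.2 : ℤ) * h1
  set M := (6 * (v - m * u) - 2 * u ^ 2).toNat
  have hM : (M : ℤ) = 6 * (v - m * u) - 2 * u ^ 2 :=
    Int.toNat_of_nonneg (hquad t ht ▸ by positivity)
  refine ⟨M, ?_, card_le_card_of_injOn
    (fun p => (3 * ((p.1 : ℤ) + p.2.1) - 2 * u, (p.1 : ℤ) - p.2.1))
    (fun p hp => mem_reps.mpr (hM ▸ hquad p hp)) fun p hp p' hp' h => ?_⟩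
  · obtain ⟨⟨hj, hk, hl⟩, -, h2⟩ := mem_solutionTriples.mp ht
    have hsq : ∀ i : ℕ, i < N → (i : ℤ) ^ 2 ≤ N ^ 2 := fun i hi =>
      pow_le_pow_left₀ (by positivity) (by exact_mod_cast hi.le) 2
    have : (M : ℤ) ≤ 18 * N ^ 2 := by
      rw [hM]
      nlinarith [sq_nonneg u, hsq _ hj, hsq _ hk, hsq _ hl]
    exact_mod_cast this
  · obtain ⟨-, h1, -⟩ := mem_solutionTriples.mp hp
    obtain ⟨-, h1', -⟩ := mem_solutionTriples.mp hp'
    simp only [Prod.mk.injEq] at h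
    have : p.1 = p'.1 ∧ p.2.1 = p'.2.1 ∧ p.2.2 = p'.2.2 := by omega
    exact Prod.ext this.1 (Prod.ext this.2.1 this.2.2)

theorem stmt_10 (ε : ℝ) (hε : 0 < ε) :
    ∃ C : ℝ, 0 < C ∧ ∀ (m : ℕ) (N : ℕ), 1 ≤ N → ∀ u v : ℤ,
      (((Finset.range N ×ˢ Finset.range N ×ˢ Finset.range N).filter
          (fun p => (p.1 : ℤ) + p.2.1 + p.2.2 = u ∧
            (p.1 : ℤ) * (p.1 + m) + p.2.1 * (p.2.1 + m) + p.2.2 * (p.2.2 + m) = v)).card : ℝ)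
        ≤ C * (N : ℝ) ^ ε := by
  obtain ⟨C, hC, hreps⟩ := exists_card_reps_le_mul_rpow (half_pos hε)
  refine ⟨C * 19 ^ (ε / 2), by positivity, fun m N hN u v => ?_⟩
  obtain ⟨M, hMN, hcard⟩ := exists_card_solutionTriples_le_card_reps N m u v
  have hM : (M : ℝ) + 1 ≤ 19 * (N : ℝ) ^ 2 := by
    have : (1 : ℝ) ≤ N := by exact_mod_cast hN
    have : (M : ℝ) ≤ 18 * N ^ 2 := by exact_mod_cast hMN
    nlinarith
  calc _ ≤ (#(reps M) : ℝ) := Nat.cast_le.mpr hcard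
    _ ≤ C * ((M : ℝ) + 1) ^ (ε / 2) := hreps M
    _ ≤ C * (19 * (N : ℝ) ^ 2) ^ (ε / 2) := by gcongr
    _ = C * 19 ^ (ε / 2) * (N : ℝ) ^ ε := by
        rw [Real.mul_rpow (by norm_num) (by positivity), ← Real.rpow_natCast_mul N.cast_nonneg]
        ring_nf
end

section
/- Suppose that for every ε > 0 there is C(ε) with ‖Σ_{k=0}^{N−1} a_k e^{−itk(k+n−1)} e^{ikθ}‖_{L⁶_t L⁶_θ([0,2π]²)} ≤ C(ε) N^ε ‖a‖_{ℓ²} for all N and all (a_k). Then for every ε > 0 there is C′(ε) with ‖ sup_{t∈[0,2π]} |Σ_{k=0}^{N−1} a_k e^{−itk(k+n−1)} e^{ikθ}| ‖_{L⁶_θ([0,2π])} ≤ C′(ε) N^{1/3+ε} ‖a‖_{ℓ²}. -/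
/-!
The supremum in `t` is controlled by a one-dimensional Sobolev inequality instead of
discretising `t`. For fixed `θ`, the fundamental theorem of calculus applied to `|F|⁶`
between an arbitrary `s` and the point `t`, averaged over `s`, gives
`|F(t)|⁶ ≤ ⨍ |F|⁶ + ∫ |∂ₜ|F|⁶| ≤ ⨍ |F|⁶ + 6 ‖F‖₆⁵ ‖∂ₜF‖₆` (Hölder in `t`); integrating
in `θ` and applying Hölder again bounds `‖sup_t |F|‖_{L⁶_θ}⁶` by
`(2π)⁻¹ ‖F‖⁶ + 6 ‖F‖⁵ ‖∂ₜF‖` in the mixed `L⁶_t L⁶_θ` norm. Now `∂ₜF` is an exponential sum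
of the same kind with coefficients `-i k(k+n-1) a_k`, whose `ℓ²` norm is at most
`(n+1) N² ‖a‖`; the hypothesis bounds both mixed norms, and the sixth root of the extra
factor `N²` is the loss `N^{1/3}`.
-/

open Complex Real MeasureTheory Set Function
open scoped Interval InnerProductSpace

theorem MeasureTheory.Integrable.memLp_rpow {α : Type*} [MeasurableSpace α] {μ : Measure α}
    {f : α → ℝ} (hf0 : 0 ≤ f) (hf : Integrable f μ) {p : ℝ} (hp : 0 < p) :
    MemLp (fun x => f x ^ p) (ENNReal.ofReal p⁻¹) μ := by
  have hp' : ENNReal.ofReal p⁻¹ ≠ 0 := by simp [hp]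
  rw [← memLp_norm_rpow_iff (hf.aestronglyMeasurable.aemeasurable.pow_const p).aestronglyMeasurable
    hp' ENNReal.ofReal_ne_top, ENNReal.div_self hp' ENNReal.ofReal_ne_top, memLp_one_iff_integrable]
  refine hf.congr (ae_of_all _ fun x => ?_)
  simp only [Real.norm_eq_abs, abs_of_nonneg (Real.rpow_nonneg (hf0 x) p),
    ENNReal.toReal_ofReal (inv_nonneg.mpr hp.le)]
  rw [Real.rpow_rpow_inv (hf0 x) hp.ne']

theorem integral_rpow_mul_rpow_le {α : Type*} [MeasurableSpace α] {μ : Measure α}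
    {f g : α → ℝ} {p q : ℝ} (hp : 0 < p) (hq : 0 < q) (hpq : p + q = 1)
    (hf0 : 0 ≤ f) (hg0 : 0 ≤ g) (hf : Integrable f μ) (hg : Integrable g μ) :
    ∫ x, f x ^ p * g x ^ q ∂μ ≤ (∫ x, f x ∂μ) ^ p * (∫ x, g x ∂μ) ^ q := by
  have hconj : p⁻¹.HolderConjugate q⁻¹ :=
    Real.holderConjugate_iff.mpr ⟨(one_lt_inv₀ hp).mpr (by linarith), by simpa using hpq⟩
  have h := integral_mul_le_Lp_mul_Lq_of_nonneg hconj
    (ae_of_all _ fun x => Real.rpow_nonneg (hf0 x) p)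
    (ae_of_all _ fun x => Real.rpow_nonneg (hg0 x) q)
    (hf.memLp_rpow hf0 hp) (hg.memLp_rpow hg0 hq)
  simpa only [one_div, inv_inv, Real.rpow_rpow_inv (hf0 _) hp.ne',
    Real.rpow_rpow_inv (hg0 _) hq.ne'] using h

theorem intervalIntegral_rpow_mul_rpow_le {f g : ℝ → ℝ} {a b p q : ℝ} (hab : a ≤ b)
    (hp : 0 < p) (hq : 0 < q) (hpq : p + q = 1) (hf0 : 0 ≤ f) (hg0 : 0 ≤ g)
    (hf : IntervalIntegrable f volume a b) (hg : IntervalIntegrable g volume a b) :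
    ∫ x in a..b, f x ^ p * g x ^ q ≤ (∫ x in a..b, f x) ^ p * (∫ x in a..b, g x) ^ q := by
  simp only [intervalIntegral.integral_of_le hab]
  exact integral_rpow_mul_rpow_le hp hq hpq hf0 hg0 hf.1 hg.1

theorem sub_le_integral_abs_deriv {g g' : ℝ → ℝ} {a b s t : ℝ} (hab : a ≤ b)
    (hg : ∀ x ∈ Icc a b, HasDerivAt g (g' x) x) (hg' : IntervalIntegrable g' volume a b)
    (hs : s ∈ Icc a b) (ht : t ∈ Icc a b) :
    g t - g s ≤ ∫ x in a..b, |g' x| := by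
  have hsub : uIcc s t ⊆ Icc a b := uIcc_subset_Icc hs ht
  have hFTC : ∫ x in s..t, g' x = g t - g s :=
    intervalIntegral.integral_eq_sub_of_hasDerivAt (fun x hx => hg x (hsub hx))
      (hg'.mono_set (by rwa [uIcc_of_le hab]))
  have hmono : ∫ x in Ι s t, ‖g' x‖ ≤ ∫ x in a..b, |g' x| := by
    rw [intervalIntegral.integral_of_le hab]
    exact setIntegral_mono_set hg'.1.norm (ae_of_all _ fun _ => norm_nonneg _)
      ((uIoc_subset_uIcc.trans hsub).eventuallyLE.trans Ioc_ae_eq_Icc.symm.le)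
  rw [← hFTC]
  exact (le_abs_self _).trans
    ((Real.norm_eq_abs _ ▸ intervalIntegral.norm_integral_le_integral_norm_uIoc).trans hmono)

theorem le_average_add_integral_abs_deriv {g g' : ℝ → ℝ} {a b t : ℝ} (hab : a < b)
    (hg : ∀ x ∈ Icc a b, HasDerivAt g (g' x) x) (hg' : IntervalIntegrable g' volume a b)
    (ht : t ∈ Icc a b) :
    g t ≤ (b - a)⁻¹ * (∫ s in a..b, g s) + ∫ s in a..b, |g' s| := by
  have hgi : IntervalIntegrable g volume a b := ContinuousOn.intervalIntegrable_of_Icc hab.le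
    fun x hx => (hg x hx).continuousAt.continuousWithinAt
  have hmean : (b - a) * g t ≤ (∫ s in a..b, g s) + (b - a) * ∫ x in a..b, |g' x| := by
    have := intervalIntegral.integral_mono_on hab.le intervalIntegrable_const
      (hgi.add intervalIntegrable_const) fun s hs =>
        (sub_le_iff_le_add'.1 (sub_le_integral_abs_deriv hab.le hg hg' hs ht))
    simpa [intervalIntegral.integral_add hgi intervalIntegrable_const] using this
  have hba : 0 < b - a := sub_pos.mpr hab
  calc g t = (b - a)⁻¹ * ((b - a) * g t) := by field_simp
    _ ≤ (b - a)⁻¹ * ((∫ s in a..b, g s) + (b - a) * ∫ x in a..b, |g' x|) := by gcongr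
    _ = _ := by field_simp

theorem iSup_norm_pow_le {ι E : Type*} [SeminormedAddCommGroup E] {s : Set ι} {F : ι → E}
    {R : ℝ} {m : ℕ} (hm : m ≠ 0) (hR : 0 ≤ R) (h : ∀ i ∈ s, ‖F i‖ ^ m ≤ R) :
    (⨆ i ∈ s, ‖F i‖) ^ m ≤ R := by
  have hroot : ⨆ i ∈ s, ‖F i‖ ≤ R ^ (m⁻¹ : ℝ) := by
    refine Real.iSup_le (fun i => Real.iSup_le (fun hi => ?_) (by positivity)) (by positivity)
    rw [← Real.pow_rpow_inv_natCast (norm_nonneg (F i)) hm]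
    gcongr
    exact h i hi
  calc (⨆ i ∈ s, ‖F i‖) ^ m ≤ (R ^ (m⁻¹ : ℝ)) ^ m :=
        pow_le_pow_left₀ (Real.iSup_nonneg fun i => Real.iSup_nonneg fun _ => norm_nonneg _) hroot m
    _ = R := Real.rpow_inv_natCast_pow hR hm

theorem intervalIntegral_swap_of_continuous {F : ℝ → ℝ → ℝ} (hF : Continuous (uncurry F))
    (a b c d : ℝ) : ∫ x in a..b, ∫ y in c..d, F x y = ∫ y in c..d, ∫ x in a..b, F x y :=
  intervalIntegral_intervalIntegral_swap ((hF.continuousOn.integrableOn_compact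
    (isCompact_uIcc.prod isCompact_uIcc)).mono_set (prod_mono uIoc_subset_uIcc uIoc_subset_uIcc))

theorem intervalIntegral_pow_five_mul_le {f g : ℝ → ℝ} {a b : ℝ} (hab : a ≤ b) (hf0 : 0 ≤ f)
    (hg0 : 0 ≤ g) (hf : Continuous f) (hg : Continuous g) :
    ∫ x in a..b, f x ^ 5 * g x
      ≤ (∫ x in a..b, f x ^ 6) ^ (5 / 6 : ℝ) * (∫ x in a..b, g x ^ 6) ^ (1 / 6 : ℝ) := by
  have h5 : ∀ x : ℝ, 0 ≤ x → (x ^ 6) ^ (5 / 6 : ℝ) = x ^ 5 := fun x hx => by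
    rw [← Real.rpow_natCast_mul hx]; norm_num
  have h1 : ∀ x : ℝ, 0 ≤ x → (x ^ 6) ^ (1 / 6 : ℝ) = x := fun x hx => by
    rw [← Real.rpow_natCast_mul hx]; norm_num
  have h := intervalIntegral_rpow_mul_rpow_le (f := fun x => f x ^ 6) (g := fun x => g x ^ 6)
    (p := 5 / 6) (q := 1 / 6) hab (by norm_num) (by norm_num) (by norm_num)
    (fun x => pow_nonneg (hf0 x) 6) (fun x => pow_nonneg (hg0 x) 6)
    (Continuous.intervalIntegrable (by fun_prop) _ _)
    (Continuous.intervalIntegrable (by fun_prop) _ _)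
  simpa only [h5 _ (hf0 _), h1 _ (hg0 _)] using h

variable {E : Type*} [NormedAddCommGroup E]

noncomputable def mixedL6Norm (F : ℝ → ℝ → E) (a b c d : ℝ) : ℝ :=
  (∫ t in a..b, ∫ θ in c..d, ‖F t θ‖ ^ 6) ^ (1 / 6 : ℝ)

theorem mixedL6Norm_nonneg (F : ℝ → ℝ → E) {a b c d : ℝ} (hab : a ≤ b) (hcd : c ≤ d) :
    0 ≤ mixedL6Norm F a b c d :=
  Real.rpow_nonneg (intervalIntegral.integral_nonneg hab fun _ _ =>
    intervalIntegral.integral_nonneg hcd fun _ _ => by positivity) _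

theorem continuous_integral_norm_pow_six {F : ℝ → ℝ → E} (hF : Continuous (uncurry F)) (a b : ℝ) :
    Continuous fun θ => ∫ t in a..b, ‖F t θ‖ ^ 6 :=
  intervalIntegral.continuous_parametric_intervalIntegral_of_continuous'
    ((hF.comp continuous_swap).norm.pow 6) a b

theorem mixedL6Norm_pow_six {F : ℝ → ℝ → E} (hF : Continuous (uncurry F)) {a b c d : ℝ}
    (hab : a ≤ b) (hcd : c ≤ d) :
    mixedL6Norm F a b c d ^ 6 = ∫ θ in c..d, ∫ t in a..b, ‖F t θ‖ ^ 6 := by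
  have hX0 : 0 ≤ ∫ t in a..b, ∫ θ in c..d, ‖F t θ‖ ^ 6 :=
    intervalIntegral.integral_nonneg hab fun _ _ =>
      intervalIntegral.integral_nonneg hcd fun _ _ => by positivity
  rw [mixedL6Norm, ← Real.rpow_mul_natCast hX0, intervalIntegral_swap_of_continuous
    (F := fun t θ => ‖F t θ‖ ^ 6) ((continuous_pow 6).comp hF.norm)]
  norm_num

theorem integral_rpow_mul_rpow_le_mixedL6Norm {F G : ℝ → ℝ → E} (hF : Continuous (uncurry F))
    (hG : Continuous (uncurry G)) {a b c d : ℝ} (hab : a ≤ b) (hcd : c ≤ d) :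
    ∫ θ in c..d, (∫ t in a..b, ‖F t θ‖ ^ 6) ^ (5 / 6 : ℝ) * (∫ t in a..b, ‖G t θ‖ ^ 6) ^ (1 / 6 : ℝ)
      ≤ mixedL6Norm F a b c d ^ 5 * mixedL6Norm G a b c d := by
  have hX0 := mixedL6Norm_nonneg F hab hcd
  have hY0 := mixedL6Norm_nonneg G hab hcd
  have h5 : mixedL6Norm F a b c d ^ 5 = (mixedL6Norm F a b c d ^ 6) ^ (5 / 6 : ℝ) := by
    rw [← Real.rpow_natCast_mul hX0]; norm_num
  have h1 : mixedL6Norm G a b c d = (mixedL6Norm G a b c d ^ 6) ^ (1 / 6 : ℝ) := by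
    rw [← Real.rpow_natCast_mul hY0]; norm_num
  rw [h5, h1, mixedL6Norm_pow_six hF hab hcd, mixedL6Norm_pow_six hG hab hcd]
  exact intervalIntegral_rpow_mul_rpow_le hcd (by norm_num) (by norm_num) (by norm_num)
    (fun _ => intervalIntegral.integral_nonneg hab fun _ _ => by positivity)
    (fun _ => intervalIntegral.integral_nonneg hab fun _ _ => by positivity)
    ((continuous_integral_norm_pow_six hF a b).intervalIntegrable _ _)
    ((continuous_integral_norm_pow_six hG a b).intervalIntegrable _ _)

variable [InnerProductSpace ℝ E]

theorem HasDerivAt.norm_pow_six {F : ℝ → E} {F' : E} {x : ℝ} (hF : HasDerivAt F F' x) :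
    HasDerivAt (fun t => ‖F t‖ ^ 6) (6 * ‖F x‖ ^ 4 * ⟪F x, F'⟫_ℝ) x := by
  have hpow : (fun t => ‖F t‖ ^ 6) = fun t => (‖F t‖ ^ 2) ^ 3 := by funext t; ring
  rw [hpow]
  exact (hF.norm_sq.fun_pow 3).congr_deriv (by norm_num; ring)

theorem abs_norm_pow_four_mul_inner_le (u v : E) :
    |6 * ‖u‖ ^ 4 * ⟪u, v⟫_ℝ| ≤ 6 * (‖u‖ ^ 5 * ‖v‖) := by
  rw [abs_mul, abs_of_nonneg (by positivity : (0 : ℝ) ≤ 6 * ‖u‖ ^ 4)]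
  calc 6 * ‖u‖ ^ 4 * |⟪u, v⟫_ℝ| ≤ 6 * ‖u‖ ^ 4 * (‖u‖ * ‖v‖) := by
        gcongr; exact abs_real_inner_le_norm u v
    _ = 6 * (‖u‖ ^ 5 * ‖v‖) := by ring

theorem norm_pow_six_le_of_hasDerivAt {F F' : ℝ → E} {a b t : ℝ} (hab : a < b)
    (hF : ∀ x, HasDerivAt F (F' x) x) (hF' : Continuous F') (ht : t ∈ Icc a b) :
    ‖F t‖ ^ 6 ≤ (b - a)⁻¹ * (∫ s in a..b, ‖F s‖ ^ 6)
      + 6 * ((∫ s in a..b, ‖F s‖ ^ 6) ^ (5 / 6 : ℝ) * (∫ s in a..b, ‖F' s‖ ^ 6) ^ (1 / 6 : ℝ)) := by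
  have hFc : Continuous F := continuous_iff_continuousAt.2 fun x => (hF x).continuousAt
  have hFTC := le_average_add_integral_abs_deriv hab (fun x _ => HasDerivAt.norm_pow_six (hF x))
    (Continuous.intervalIntegrable (by fun_prop) _ _) ht
  have hderiv : ∫ s in a..b, |6 * ‖F s‖ ^ 4 * ⟪F s, F' s⟫_ℝ|
      ≤ 6 * ((∫ s in a..b, ‖F s‖ ^ 6) ^ (5 / 6 : ℝ) * (∫ s in a..b, ‖F' s‖ ^ 6) ^ (1 / 6 : ℝ)) :=
    calc ∫ s in a..b, |6 * ‖F s‖ ^ 4 * ⟪F s, F' s⟫_ℝ|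
        ≤ ∫ s in a..b, 6 * (‖F s‖ ^ 5 * ‖F' s‖) :=
          intervalIntegral.integral_mono_on hab.le (Continuous.intervalIntegrable (by fun_prop) _ _)
            (Continuous.intervalIntegrable (by fun_prop) _ _)
            fun s _ => abs_norm_pow_four_mul_inner_le (F s) (F' s)
      _ ≤ _ := by
          rw [intervalIntegral.integral_const_mul]
          gcongr
          exact intervalIntegral_pow_five_mul_le hab.le (fun _ => norm_nonneg _)
            (fun _ => norm_nonneg _) hFc.norm hF'.norm
  linarith

theorem iSup_norm_pow_six_le_of_hasDerivAt {F F' : ℝ → E} {a b : ℝ} (hab : a < b)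
    (hF : ∀ x, HasDerivAt F (F' x) x) (hF' : Continuous F') :
    (⨆ t ∈ Icc a b, ‖F t‖) ^ 6 ≤ (b - a)⁻¹ * (∫ s in a..b, ‖F s‖ ^ 6)
      + 6 * ((∫ s in a..b, ‖F s‖ ^ 6) ^ (5 / 6 : ℝ) * (∫ s in a..b, ‖F' s‖ ^ 6) ^ (1 / 6 : ℝ)) := by
  have := sub_pos.2 hab
  have : 0 ≤ ∫ s in a..b, ‖F s‖ ^ 6 :=
    intervalIntegral.integral_nonneg hab.le fun _ _ => by positivity
  have : 0 ≤ ∫ s in a..b, ‖F' s‖ ^ 6 :=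
    intervalIntegral.integral_nonneg hab.le fun _ _ => by positivity
  exact iSup_norm_pow_le (by norm_num) (by positivity)
    fun t ht => norm_pow_six_le_of_hasDerivAt hab hF hF' ht

theorem integral_iSup_norm_pow_six_le {F F' : ℝ → ℝ → E} {a b c d : ℝ} (hab : a < b) (hcd : c ≤ d)
    (hF : Continuous (uncurry F)) (hF' : Continuous (uncurry F'))
    (hderiv : ∀ t θ, HasDerivAt (F · θ) (F' t θ) t) :
    ∫ θ in c..d, (⨆ t ∈ Icc a b, ‖F t θ‖) ^ 6
      ≤ (b - a)⁻¹ * mixedL6Norm F a b c d ^ 6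
        + 6 * mixedL6Norm F a b c d ^ 5 * mixedL6Norm F' a b c d := by
  have hF6 := continuous_integral_norm_pow_six hF a b
  have hF'6 := continuous_integral_norm_pow_six hF' a b
  -- A non-integrable integrand has integral `0`, so measurability of the supremum is never needed.
  by_cases hint : IntervalIntegrable (fun θ => (⨆ t ∈ Icc a b, ‖F t θ‖) ^ 6) volume c d
  swap
  · rw [intervalIntegral.integral_undef hint]
    have := sub_pos.2 hab
    have := mixedL6Norm_nonneg F hab.le hcd
    have := mixedL6Norm_nonneg F' hab.le hcd
    positivity
  calc ∫ θ in c..d, (⨆ t ∈ Icc a b, ‖F t θ‖) ^ 6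
      ≤ ∫ θ in c..d, ((b - a)⁻¹ * (∫ t in a..b, ‖F t θ‖ ^ 6) + 6 *
          ((∫ t in a..b, ‖F t θ‖ ^ 6) ^ (5 / 6 : ℝ) * (∫ t in a..b, ‖F' t θ‖ ^ 6) ^ (1 / 6 : ℝ))) :=
        intervalIntegral.integral_mono_on hcd hint
          (Continuous.intervalIntegrable (by fun_prop (disch := norm_num)) _ _)
          fun θ _ => iSup_norm_pow_six_le_of_hasDerivAt hab (hderiv · θ) (by fun_prop)
    _ = (b - a)⁻¹ * (∫ θ in c..d, ∫ t in a..b, ‖F t θ‖ ^ 6) + 6 * ∫ θ in c..d,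
          (∫ t in a..b, ‖F t θ‖ ^ 6) ^ (5 / 6 : ℝ) * (∫ t in a..b, ‖F' t θ‖ ^ 6) ^ (1 / 6 : ℝ) := by
        rw [intervalIntegral.integral_add (Continuous.intervalIntegrable (by fun_prop) _ _)
          (Continuous.intervalIntegrable (by fun_prop (disch := norm_num)) _ _),
          intervalIntegral.integral_const_mul, intervalIntegral.integral_const_mul]
    _ ≤ _ := by
        rw [mul_assoc 6, mixedL6Norm_pow_six hF hab.le hcd]
        gcongr
        exact integral_rpow_mul_rpow_le_mixedL6Norm hF hF' hab.le hcd

noncomputable def expSum (ω : ℕ → ℂ) (N : ℕ) (a : ℕ → ℂ) (t θ : ℝ) : ℂ :=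
  ∑ k ∈ Finset.range N, a k * Complex.exp (-Complex.I * t * ω k) * Complex.exp (Complex.I * k * θ)

theorem continuous_expSum (ω : ℕ → ℂ) (N : ℕ) (a : ℕ → ℂ) :
    Continuous (uncurry (expSum ω N a)) := by
  unfold expSum; fun_prop

theorem hasDerivAt_expSum (ω : ℕ → ℂ) (N : ℕ) (a : ℕ → ℂ) (t θ : ℝ) :
    HasDerivAt (expSum ω N a · θ) (expSum ω N (fun k => -Complex.I * ω k * a k) t θ) t := by
  unfold expSum
  refine HasDerivAt.fun_sum fun k _ => ?_
  have hphase : HasDerivAt (fun s : ℝ => -Complex.I * s * ω k) (-Complex.I * ω k) t := by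
    simpa using ((hasDerivAt_id t).ofReal_comp.const_mul (-Complex.I)).mul_const (ω k)
  exact ((hphase.cexp.const_mul (a k)).mul_const (Complex.exp (Complex.I * k * θ))).congr_deriv
    (by ring)

theorem sum_norm_sq_rpow_le_of_norm_le {ι E : Type*} [SeminormedAddCommGroup E] {s : Finset ι}
    {u v : ι → E} {c : ℝ} (hc : 0 ≤ c) (h : ∀ k ∈ s, ‖v k‖ ≤ c * ‖u k‖) :
    (∑ k ∈ s, ‖v k‖ ^ 2) ^ (1 / 2 : ℝ) ≤ c * (∑ k ∈ s, ‖u k‖ ^ 2) ^ (1 / 2 : ℝ) := by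
  simp only [← Real.sqrt_eq_rpow]
  calc √(∑ k ∈ s, ‖v k‖ ^ 2) ≤ √(c ^ 2 * ∑ k ∈ s, ‖u k‖ ^ 2) := by
        rw [Finset.mul_sum]
        gcongr with k hk
        rw [← mul_pow]
        exact pow_le_pow_left₀ (norm_nonneg _) (h k hk) 2
    _ = c * √(∑ k ∈ s, ‖u k‖ ^ 2) := by rw [Real.sqrt_mul (sq_nonneg c), Real.sqrt_sq hc]

theorem norm_natCast_mul_natCast_add_le {n N k : ℕ} (hk : k < N) :
    ‖(k : ℂ) * ((k + (n - 1) : ℕ) : ℂ)‖ ≤ (n + 1) * N ^ 2 := by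
  rw [norm_mul, Complex.norm_natCast, Complex.norm_natCast]
  exact_mod_cast calc k * (k + (n - 1)) ≤ N * (N + n) := Nat.mul_le_mul hk.le (by omega)
    _ ≤ (n + 1) * N ^ 2 := by nlinarith [Nat.mul_le_mul_left n (Nat.le_self_pow two_ne_zero N)]

theorem sum_norm_sq_rpow_deriv_coeff_le (n N : ℕ) (a : ℕ → ℂ) :
    (∑ k ∈ Finset.range N, ‖-Complex.I * ((k : ℂ) * ((k + (n - 1) : ℕ) : ℂ)) * a k‖ ^ 2)
        ^ (1 / 2 : ℝ)
      ≤ (n + 1) * N ^ 2 * (∑ k ∈ Finset.range N, ‖a k‖ ^ 2) ^ (1 / 2 : ℝ) := by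
  refine sum_norm_sq_rpow_le_of_norm_le (by positivity) fun k hk => ?_
  rw [norm_mul, norm_mul, norm_neg, Complex.norm_I, one_mul]
  exact mul_le_mul_of_nonneg_right (norm_natCast_mul_natCast_add_le (Finset.mem_range.1 hk))
    (norm_nonneg _)

theorem mul_pow_six_add_le {κ x y M c : ℝ} (hκ : κ ≤ 1) (hx0 : 0 ≤ x) (hy0 : 0 ≤ y)
    (hx : x ≤ M) (hy : y ≤ c * M) (hc : 1 ≤ c) : κ * x ^ 6 + 6 * x ^ 5 * y ≤ 7 * c * M ^ 6 := by
  have hM0 : 0 ≤ M := hx0.trans hx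
  calc κ * x ^ 6 + 6 * x ^ 5 * y ≤ 1 * M ^ 6 + 6 * M ^ 5 * (c * M) := by gcongr
    _ ≤ 7 * c * M ^ 6 := by nlinarith [mul_le_mul_of_nonneg_right hc (pow_nonneg hM0 6)]

theorem rpow_one_sixth_le_of_le_mul_sq_mul_pow_six {L A N M : ℝ} (hL : 0 ≤ L) (hA : 0 ≤ A)
    (hN : 0 ≤ N) (hM : 0 ≤ M) (h : L ≤ A * N ^ 2 * M ^ 6) :
    L ^ (1 / 6 : ℝ) ≤ A ^ (1 / 6 : ℝ) * N ^ (1 / 3 : ℝ) * M := by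
  calc L ^ (1 / 6 : ℝ) ≤ (A * N ^ 2 * M ^ 6) ^ (1 / 6 : ℝ) := by gcongr
    _ = A ^ (1 / 6 : ℝ) * N ^ (1 / 3 : ℝ) * M := by
        rw [Real.mul_rpow (by positivity) (by positivity), Real.mul_rpow hA (by positivity),
          ← Real.rpow_natCast_mul hN, ← Real.rpow_natCast_mul hM]
        norm_num

theorem stmt_17_general (n : ℕ)
    (H : ∀ ε : ℝ, 0 < ε → ∃ C : ℝ, 0 < C ∧ ∀ (N : ℕ), 1 ≤ N → ∀ (a : ℕ → ℂ),
      (∫ t in (0:ℝ)..(2*π), ∫ θ in (0:ℝ)..(2*π),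
          ‖∑ k ∈ Finset.range N,
              a k * Complex.exp (-Complex.I * t * (k * (k + (n-1):ℕ)))
                  * Complex.exp (Complex.I * k * θ)‖^6) ^ ((1:ℝ)/6)
        ≤ C * (N : ℝ) ^ ε * (∑ k ∈ Finset.range N, ‖a k‖^2) ^ ((1:ℝ)/2)) :
    ∀ ε : ℝ, 0 < ε → ∃ C' : ℝ, 0 < C' ∧ ∀ (N : ℕ), 1 ≤ N → ∀ (a : ℕ → ℂ),
      (∫ θ in (0:ℝ)..(2*π),
          (⨆ t ∈ Set.Icc (0:ℝ) (2*π),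
            ‖∑ k ∈ Finset.range N,
                a k * Complex.exp (-Complex.I * t * (k * (k + (n-1):ℕ)))
                    * Complex.exp (Complex.I * k * θ)‖)^6) ^ ((1:ℝ)/6)
        ≤ C' * (N : ℝ) ^ ((1:ℝ)/3 + ε)
            * (∑ k ∈ Finset.range N, ‖a k‖^2) ^ ((1:ℝ)/2) := by
  intro ε hε
  obtain ⟨C, hC, hCN⟩ := H ε hε
  refine ⟨(7 * (n + 1)) ^ (1 / 6 : ℝ) * C, by positivity, fun N hN a => ?_⟩
  set ω : ℕ → ℂ := fun k => (k : ℂ) * ((k + (n - 1) : ℕ) : ℂ)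
  set M := C * (N : ℝ) ^ ε * (∑ k ∈ Finset.range N, ‖a k‖ ^ 2) ^ (1 / 2 : ℝ) with hM
  have hx : mixedL6Norm (expSum ω N a) 0 (2 * π) 0 (2 * π) ≤ M := hCN N hN a
  have hy : mixedL6Norm (expSum ω N fun k => -Complex.I * ω k * a k) 0 (2 * π) 0 (2 * π)
      ≤ (n + 1) * N ^ 2 * M :=
    (hCN N hN _).trans (by grw [sum_norm_sq_rpow_deriv_coeff_le n N a]; exact le_of_eq (by ring))
  have key := integral_iSup_norm_pow_six_le two_pi_pos two_pi_pos.le (continuous_expSum ω N a)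
    (continuous_expSum ω N _) (hasDerivAt_expSum ω N a)
  have hN1 : (1 : ℝ) ≤ N := by exact_mod_cast hN
  calc _ ≤ (7 * (n + 1)) ^ (1 / 6 : ℝ) * (N : ℝ) ^ (1 / 3 : ℝ) * M := by
        refine rpow_one_sixth_le_of_le_mul_sq_mul_pow_six
          (intervalIntegral.integral_nonneg two_pi_pos.le fun _ _ => by positivity)
          (by positivity) (by positivity) (by positivity) ?_
        have h2π : (2 * π - 0)⁻¹ ≤ 1 := inv_le_one_of_one_le₀ (by linarith [pi_gt_three])
        refine key.trans ((mul_pow_six_add_le h2π (mixedL6Norm_nonneg _ two_pi_pos.le two_pi_pos.le)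
          (mixedL6Norm_nonneg _ two_pi_pos.le two_pi_pos.le) hx hy ?_).trans_eq (by ring))
        nlinarith
    _ = _ := by rw [hM, Real.rpow_add (by positivity)]; ring

theorem stmt_17 (n : ℕ) (hn : 1 ≤ n)
    (H : ∀ ε : ℝ, 0 < ε → ∃ C : ℝ, 0 < C ∧ ∀ (N : ℕ), 1 ≤ N → ∀ (a : ℕ → ℂ),
      (∫ t in (0:ℝ)..(2*π), ∫ θ in (0:ℝ)..(2*π),
          ‖∑ k ∈ Finset.range N,
              a k * Complex.exp (-Complex.I * t * (k * (k + (n-1):ℕ)))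
                  * Complex.exp (Complex.I * k * θ)‖^6) ^ ((1:ℝ)/6)
        ≤ C * (N : ℝ) ^ ε * (∑ k ∈ Finset.range N, ‖a k‖^2) ^ ((1:ℝ)/2)) :
    ∀ ε : ℝ, 0 < ε → ∃ C' : ℝ, 0 < C' ∧ ∀ (N : ℕ), 1 ≤ N → ∀ (a : ℕ → ℂ),
      (∫ θ in (0:ℝ)..(2*π),
          (⨆ t ∈ Set.Icc (0:ℝ) (2*π),
            ‖∑ k ∈ Finset.range N,
                a k * Complex.exp (-Complex.I * t * (k * (k + (n-1):ℕ)))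
                    * Complex.exp (Complex.I * k * θ)‖)^6) ^ ((1:ℝ)/6)
        ≤ C' * (N : ℝ) ^ ((1:ℝ)/3 + ε)
            * (∑ k ∈ Finset.range N, ‖a k‖^2) ^ ((1:ℝ)/2) :=
  stmt_17_general n H
end
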